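/- arXiv:1207.5062 — 10 statements merged into one kernel-verified Lean document; each statement's English description precedes it below -/
import Mathlib

section
/- Let d ≥ 2. For any Borel sets A, B ⊆ ℝ^d with finite Lebesgue measures, |A^* + B^*| ≤ |A + B|, where A^* denotes the Schwarz symmetrization (here |·| of a sumset means outer Lebesgue measure). -/
open MeasureTheory Set Pointwise Filter ENNReal

noncomputable section

abbrev Edim (n : ℕ) := EuclideanSpace ℝ (Fin n)

/-- We identify `ℝ^d` with `ℝ^{d-1} × ℝ`. -/
abbrev Sp (n : ℕ) := Edim n × ℝ

/-- The vertical slice `A_x ⊆ ℝ` of a set `A ⊆ ℝ^{n} × ℝ`. -/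
def vslice {n : ℕ} (A : Set (Sp n)) (x : Edim n) : Set ℝ := {y | (x, y) ∈ A}

/-- The horizontal slice of `A ⊆ ℝ^n × ℝ` at height `t`. -/
def hslice {n : ℕ} (A : Set (Sp n)) (t : ℝ) : Set (Edim n) := {x | (x, t) ∈ A}

/-- Steiner symmetrization `A^⋆`: the slice `(A^⋆)_x` is the open interval
`(-|A_x|/2, |A_x|/2)` centered at `0` of length `|A_x|` (empty if `|A_x| = 0`). -/
def steiner {n : ℕ} (A : Set (Sp n)) : Set (Sp n) :=
  {p | ENNReal.ofReal (2 * |p.2|) < volume (vslice A p.1)}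

/-- Schwarz symmetrization `A^*`: the horizontal slice of `A^*` at height `t` is the open
ball in `ℝ^n` centered at `0` whose measure equals that of the corresponding slice of `A`. -/
def schwarz {n : ℕ} (A : Set (Sp n)) : Set (Sp n) :=
  {p | volume (Metric.ball (0 : Edim n) ‖p.1‖) < volume (hslice A p.2)}

/-- The symmetrization `A^♮ = (A^⋆)^*`. -/
def natSymm {n : ℕ} (A : Set (Sp n)) : Set (Sp n) := schwarz (steiner A)




lemma compact_sumset (K C : Set ℝ) (hK : IsCompact K) (hC : IsCompact C)
    (hKne : K.Nonempty) (hCne : C.Nonempty) :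
    volume K + volume C ≤ volume (K + C) := by
  set a := sSup K with ha
  set b := sInf C with hb
  have haK : a ∈ K := hK.sSup_mem hKne
  have hbC : b ∈ C := hC.sInf_mem hCne
  set X : Set ℝ := b +ᵥ K with hX
  set Y : Set ℝ := a +ᵥ (C \ {b}) with hY
  have hXsub : X ⊆ K + C := by
    rintro _ ⟨x, hx, rfl⟩
    simpa [add_comm] using add_mem_add hx hbC
  have hYsub : Y ⊆ K + C := by
    rintro _ ⟨y, hy, rfl⟩
    exact add_mem_add haK hy.1
  have hXle : ∀ z ∈ X, z ≤ a + b := by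
    rintro _ ⟨x, hx, rfl⟩
    have := le_csSup hK.bddAbove hx
    simpa [add_comm] using add_le_add_right this b
  have hYgt : ∀ z ∈ Y, a + b < z := by
    rintro _ ⟨y, ⟨hy, hy'⟩, rfl⟩
    have h1 : b ≤ y := csInf_le hC.bddBelow hy
    have : b < y := lt_of_le_of_ne h1 (Ne.symm (by simpa using hy'))
    simpa using add_lt_add_left this a
  have hdisj : Disjoint X Y := by
    rw [disjoint_left]
    intro z hzX hzY
    exact absurd (hXle z hzX) (not_le.mpr (hYgt z hzY))
  have hYm : MeasurableSet Y :=
    (hC.measurableSet.diff (measurableSet_singleton b)).const_vadd a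
  calc volume K + volume C
      = volume X + volume Y := by
        rw [measure_vadd, measure_vadd, measure_diff_null (measure_singleton b)]
    _ = volume (X ∪ Y) := (measure_union hdisj hYm).symm
    _ ≤ volume (K + C) := measure_mono (union_subset hXsub hYsub)

/-- One-dimensional Brunn-Minkowski. -/
lemma oneDim_BM (A B : Set ℝ) (hA : MeasurableSet A) (hB : MeasurableSet B)
    (hAne : A.Nonempty) (hBne : B.Nonempty) :
    volume A + volume B ≤ volume (A + B) := by
  rcases hAne with ⟨a0, ha0⟩
  rcases hBne with ⟨b0, hb0⟩
  rcases eq_or_ne (volume A) ⊤ with hAt | hAt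
  · have hsub : b0 +ᵥ A ⊆ A + B := by
      rintro _ ⟨x, hx, rfl⟩
      simpa [add_comm] using add_mem_add hx hb0
    have : volume (b0 +ᵥ A) ≤ volume (A+B) := measure_mono hsub
    rw [measure_vadd, hAt] at this
    simp [top_le_iff.mp this]
  rcases eq_or_ne (volume B) ⊤ with hBt | hBt
  · have hsub : a0 +ᵥ B ⊆ A + B := by
      rintro _ ⟨x, hx, rfl⟩
      exact add_mem_add ha0 hx
    have : volume (a0 +ᵥ B) ≤ volume (A+B) := measure_mono hsub
    rw [measure_vadd, hBt] at this
    simp [top_le_iff.mp this]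
  refine ENNReal.le_of_forall_pos_le_add fun ε hε _ => ?_
  have hε2 : (ENNReal.ofReal (ε/2) : ℝ≥0∞) ≠ 0 := by
    simp [ENNReal.ofReal_eq_zero, not_le, half_pos, hε]
  obtain ⟨K₁, hK₁A, hK₁c, hK₁⟩ := hA.exists_isCompact_lt_add (μ := volume) hAt hε2
  obtain ⟨K₂, hK₂B, hK₂c, hK₂⟩ := hB.exists_isCompact_lt_add (μ := volume) hBt hε2
  set K₁' := K₁ ∪ {a0} with hK₁'
  set K₂' := K₂ ∪ {b0} with hK₂'
  have hK₁'c : IsCompact K₁' := hK₁c.union isCompact_singleton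
  have hK₂'c : IsCompact K₂' := hK₂c.union isCompact_singleton
  have hK₁'A : K₁' ⊆ A := union_subset hK₁A (by simpa using ha0)
  have hK₂'B : K₂' ⊆ B := union_subset hK₂B (by simpa using hb0)
  have key := compact_sumset K₁' K₂' hK₁'c hK₂'c ⟨a0, by simp [hK₁']⟩ ⟨b0, by simp [hK₂']⟩
  have h1 : volume A ≤ volume K₁' + ENNReal.ofReal (ε/2) :=
    le_trans hK₁.le (add_le_add_left (measure_mono subset_union_left) _)
  have h2 : volume B ≤ volume K₂' + ENNReal.ofReal (ε/2) :=
    le_trans hK₂.le (add_le_add_left (measure_mono subset_union_left) _)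
  calc volume A + volume B
      ≤ (volume K₁' + volume K₂') + (ENNReal.ofReal (ε/2) + ENNReal.ofReal (ε/2)) := by
        calc volume A + volume B ≤ (volume K₁' + ENNReal.ofReal (ε/2)) + (volume K₂' + ENNReal.ofReal (ε/2)) := add_le_add h1 h2
        _ = _ := by ring
    _ ≤ volume (K₁' + K₂') + ENNReal.ofReal ε := by
        refine add_le_add key ?_
        rw [← ENNReal.ofReal_add (by positivity) (by positivity)]
        simp
    _ ≤ volume (A + B) + ε := by
        rw [ENNReal.ofReal_coe_nnreal]
        exact add_le_add_left (measure_mono (add_subset_add hK₁'A hK₂'B)) _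


open scoped NNReal in
lemma ennreal_geom_mean (a b : ℝ≥0∞) {t : ℝ} (ht : 0 < t) (ht1 : t < 1) :
    a ^ (1-t) * b ^ t ≤ ENNReal.ofReal (1-t) * a + ENNReal.ofReal t * b := by
  rcases eq_or_ne a ⊤ with rfl | ha
  · have : ENNReal.ofReal (1-t) * (⊤:ℝ≥0∞) = ⊤ :=
      ENNReal.mul_top (by simp [ENNReal.ofReal_eq_zero]; linarith)
    rw [this]
    simp [top_add]
  rcases eq_or_ne b ⊤ with rfl | hb
  · have : ENNReal.ofReal t * (⊤:ℝ≥0∞) = ⊤ :=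
      ENNReal.mul_top (by simp [ENNReal.ofReal_eq_zero]; linarith)
    rw [this]
    simp
  lift a to ℝ≥0 using ha
  lift b to ℝ≥0 using hb
  have key := NNReal.geom_mean_le_arith_mean2_weighted (1-t).toNNReal t.toNNReal a b ?_
  · have hc1 : ((1-t).toNNReal : ℝ) = 1 - t := Real.coe_toNNReal _ (by linarith)
    have hc2 : (t.toNNReal : ℝ) = t := Real.coe_toNNReal _ ht.le
    rw [hc1, hc2] at key
    calc (a:ℝ≥0∞) ^ (1-t) * (b:ℝ≥0∞) ^ t
        = ((a ^ (1-t) * b ^ t : ℝ≥0) : ℝ≥0∞) := by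
          rw [← ENNReal.coe_rpow_of_nonneg _ (by linarith : (0:ℝ) ≤ 1 - t),
            ← ENNReal.coe_rpow_of_nonneg _ ht.le, ENNReal.coe_mul]
      _ ≤ (((1-t).toNNReal * a + t.toNNReal * b : ℝ≥0) : ℝ≥0∞) := by
          exact_mod_cast ENNReal.coe_le_coe.mpr key
      _ = ENNReal.ofReal (1-t) * a + ENNReal.ofReal t * b := by
          rw [ENNReal.coe_add, ENNReal.coe_mul, ENNReal.coe_mul]
          rfl
  · have : (0:ℝ) ≤ 1 - t := by linarith
    rw [← Real.toNNReal_add this ht.le]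
    simp


/-- Linear substitution in a lintegral over `Ioo 0 b`. -/
lemma subst_Ioo (φ : ℝ → ℝ≥0∞) (hφ : Measurable φ) {a b : ℝ} (ha : 0 < a) (hb : 0 < b) :
    ∫⁻ s in Ioo 0 b, φ (a*s) = ENNReal.ofReal a⁻¹ * ∫⁻ σ in Ioo 0 (a*b), φ σ := by
  have hmap := Real.map_volume_mul_left (ne_of_gt ha)
  have hpre : (fun x => a * x) ⁻¹' (Ioo 0 (a*b)) = Ioo 0 b := by
    ext x
    simp only [mem_preimage, mem_Ioo]
    constructor
    · rintro ⟨h1, h2⟩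
      refine ⟨?_, by nlinarith⟩
      nlinarith
    · rintro ⟨h1, h2⟩
      exact ⟨by positivity, by nlinarith⟩
  calc ∫⁻ s in Ioo 0 b, φ (a*s)
      = ∫⁻ σ in Ioo 0 (a*b), φ σ ∂(Measure.map (fun x => a * x) volume) := by
        rw [setLIntegral_map measurableSet_Ioo hφ (measurable_const_mul a), hpre]
    _ = ENNReal.ofReal a⁻¹ * ∫⁻ σ in Ioo 0 (a*b), φ σ := by
        rw [hmap]
        rw [Measure.restrict_smul, lintegral_smul_measure]
        congr 1
        rw [abs_of_pos (by positivity)]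

/-- Layer-cake for a function truncated at level `c`. -/
lemma trunc_layercake {α : Type*} [MeasurableSpace α] (μ : Measure α) (f : α → ℝ≥0∞)
    (hf : Measurable f) {c : ℝ} (hc : 0 < c) :
    ∫⁻ x, min (f x) (ENNReal.ofReal c) ∂μ
      = ∫⁻ s in Ioo 0 c, μ {x | ENNReal.ofReal s < f x} := by
  have hne : ∀ x, min (f x) (ENNReal.ofReal c) ≠ ⊤ :=
    fun x => ne_top_of_le_ne_top ofReal_ne_top (min_le_right _ _)
  have h1 : ∀ x, ENNReal.ofReal ((min (f x) (ENNReal.ofReal c)).toReal)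
      = min (f x) (ENNReal.ofReal c) := fun x => ofReal_toReal (hne x)
  have hmble : Measurable fun x => (min (f x) (ENNReal.ofReal c)).toReal :=
    (hf.min measurable_const).ennreal_toReal
  calc ∫⁻ x, min (f x) (ENNReal.ofReal c) ∂μ
      = ∫⁻ x, ENNReal.ofReal ((min (f x) (ENNReal.ofReal c)).toReal) ∂μ :=
        (lintegral_congr h1).symm
    _ = ∫⁻ s in Ioi 0, μ {x | s < (min (f x) (ENNReal.ofReal c)).toReal} :=
        lintegral_eq_lintegral_meas_lt μ (ae_of_all _ fun x => ENNReal.toReal_nonneg)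
          hmble.aemeasurable
    _ = ∫⁻ s in Ioi 0, (Ioo 0 c).indicator (fun s => μ {x | ENNReal.ofReal s < f x}) s := by
        refine setLIntegral_congr_fun measurableSet_Ioi (fun s hs => ?_)
        have hs0 : (0:ℝ) < s := hs
        have hset : {x | s < (min (f x) (ENNReal.ofReal c)).toReal}
            = {x | ENNReal.ofReal s < min (f x) (ENNReal.ofReal c)} := by
          ext x
          simp only [mem_setOf_eq]
          rw [ENNReal.ofReal_lt_iff_lt_toReal hs0.le (hne x)]
        rw [hset]
        rcases lt_or_ge s c with hsc | hsc
        · rw [indicator_of_mem (by exact ⟨hs0, hsc⟩ : s ∈ Ioo 0 c)]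
          congr 1
          ext x
          simp only [mem_setOf_eq, lt_min_iff]
          exact and_iff_left_iff_imp.mpr (fun _ => (ENNReal.ofReal_lt_ofReal_iff hc).mpr hsc)
        · rw [indicator_of_notMem (by simp [mem_Ioo, not_and, not_lt, hsc] : s ∉ Ioo 0 c)]
          convert measure_empty
          · ext x
            simp only [mem_setOf_eq, lt_min_iff, mem_empty_iff_false, iff_false, not_and]
            intro _
            exact not_lt.mpr (ENNReal.ofReal_le_ofReal hsc)
          · infer_instance
    _ = ∫⁻ s in Ioo 0 c, μ {x | ENNReal.ofReal s < f x} := by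
        rw [lintegral_indicator measurableSet_Ioo, Measure.restrict_restrict measurableSet_Ioo,
          inter_eq_self_of_subset_left Ioo_subset_Ioi_self]

lemma oneDim_PL_core {t : ℝ} (ht : 0 < t) (ht1 : t < 1)
    (f g h : ℝ → ℝ≥0∞) (hf : Measurable f) (hg : Measurable g) (hh : Measurable h)
    (hyp : ∀ x y : ℝ, f x ^ (1-t) * g y ^ t ≤ h ((1-t) * x + t * y))
    {c₁ c₂ : ℝ} (hc₁ : 0 < c₁) (hc₂ : 0 < c₂)
    (hc₁S : ENNReal.ofReal c₁ ≤ ⨆ x, f x) (hc₂S : ENNReal.ofReal c₂ ≤ ⨆ x, g x) :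
    (∫⁻ x, min (f x) (ENNReal.ofReal c₁)) ^ (1-t) * (∫⁻ x, min (g x) (ENNReal.ofReal c₂)) ^ t
      ≤ ∫⁻ x, h x := by
  have ht' : (0:ℝ) < 1 - t := by linarith
  set C : ℝ := c₁ ^ (1-t) * c₂ ^ t with hCdef
  have hC : 0 < C := mul_pos (Real.rpow_pos_of_pos hc₁ _) (Real.rpow_pos_of_pos hc₂ _)
  set F : ℝ → ℝ≥0∞ := fun σ => volume {x | ENNReal.ofReal σ < f x} with hFdef
  set G : ℝ → ℝ≥0∞ := fun σ => volume {x | ENNReal.ofReal σ < g x} with hGdef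
  have hFanti : Antitone F := fun σ σ' hσ => measure_mono
    (fun x hx => lt_of_le_of_lt (ENNReal.ofReal_le_ofReal hσ) hx)
  have hGanti : Antitone G := fun σ σ' hσ => measure_mono
    (fun x hx => lt_of_le_of_lt (ENNReal.ofReal_le_ofReal hσ) hx)
  have hFm : Measurable F := hFanti.measurable
  have hGm : Measurable G := hGanti.measurable
  set If := ∫⁻ x, min (f x) (ENNReal.ofReal c₁) with hIf
  set Ig := ∫⁻ x, min (g x) (ENNReal.ofReal c₂) with hIg
  -- pointwise superlevel estimate
  have key : ∀ s ∈ Ioo (0:ℝ) C,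
      ENNReal.ofReal (1-t) * F (c₁/C*s) + ENNReal.ofReal t * G (c₂/C*s)
        ≤ volume {x | ENNReal.ofReal s < h x} := by
    rintro s ⟨hs0, hsC⟩
    have hu1 : c₁/C*s < c₁ := by
      have h1 : s/C < 1 := (div_lt_one hC).mpr hsC
      have : c₁/C*s = c₁*(s/C) := by ring
      rw [this]
      nlinarith
    have hu2 : c₂/C*s < c₂ := by
      have h1 : s/C < 1 := (div_lt_one hC).mpr hsC
      have : c₂/C*s = c₂*(s/C) := by ring
      rw [this]
      nlinarith
    have hp1 : (0:ℝ) < c₁/C*s := by positivity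
    have hp2 : (0:ℝ) < c₂/C*s := by positivity
    set X := {x : ℝ | ENNReal.ofReal (c₁/C*s) < f x} with hXdef
    set Y := {y : ℝ | ENNReal.ofReal (c₂/C*s) < g y} with hYdef
    have hXmeas : MeasurableSet X := hf measurableSet_Ioi
    have hYmeas : MeasurableSet Y := hg measurableSet_Ioi
    have hXne : X.Nonempty := by
      have : ENNReal.ofReal (c₁/C*s) < ⨆ x, f x :=
        lt_of_lt_of_le ((ENNReal.ofReal_lt_ofReal_iff hc₁).mpr hu1) hc₁S
      rw [lt_iSup_iff] at this
      exact this
    have hYne : Y.Nonempty := by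
      have : ENNReal.ofReal (c₂/C*s) < ⨆ x, g x :=
        lt_of_lt_of_le ((ENNReal.ofReal_lt_ofReal_iff hc₂).mpr hu2) hc₂S
      rw [lt_iSup_iff] at this
      exact this
    have hsub : (1-t) • X + t • Y ⊆ {x | ENNReal.ofReal s < h x} := by
      rintro _ ⟨_, ⟨x, hx, rfl⟩, _, ⟨y, hy, rfl⟩, rfl⟩
      show ENNReal.ofReal s < h ((1-t) • x + t • y)
      have hcalc : ENNReal.ofReal s
          = ENNReal.ofReal (c₁/C*s) ^ (1-t) * ENNReal.ofReal (c₂/C*s) ^ t := by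
        rw [ENNReal.ofReal_rpow_of_pos hp1, ENNReal.ofReal_rpow_of_pos hp2,
          ← ENNReal.ofReal_mul (by positivity)]
        congr 1
        symm
        have e1 : c₁/C*s = c₁*(s/C) := by ring
        have e2 : c₂/C*s = c₂*(s/C) := by ring
        have hsC0 : (0:ℝ) < s/C := by positivity
        rw [e1, e2, Real.mul_rpow hc₁.le hsC0.le, Real.mul_rpow hc₂.le hsC0.le]
        calc c₁ ^ (1-t) * (s/C) ^ (1-t) * (c₂ ^ t * (s/C) ^ t)
            = (c₁ ^ (1-t) * c₂ ^ t) * ((s/C) ^ (1-t) * (s/C) ^ t) := by ring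
          _ = C * (s/C) ^ ((1-t) + t) := by rw [← Real.rpow_add hsC0]
          _ = s := by rw [show (1-t) + t = (1:ℝ) by ring, Real.rpow_one]; field_simp
      rw [hcalc]
      calc ENNReal.ofReal (c₁/C*s) ^ (1-t) * ENNReal.ofReal (c₂/C*s) ^ t
          < f x ^ (1-t) * g y ^ t :=
            ENNReal.mul_lt_mul (ENNReal.rpow_lt_rpow hx ht') (ENNReal.rpow_lt_rpow hy ht)
        _ ≤ h ((1-t) * x + t * y) := hyp x y
        _ = h ((1-t) • x + t • y) := by rw [smul_eq_mul, smul_eq_mul]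
    have hX'm : MeasurableSet ((1-t) • X) := hXmeas.const_smul₀ (1-t)
    have hY'm : MeasurableSet (t • Y) := hYmeas.const_smul₀ t
    have hvolX : volume ((1-t) • X) = ENNReal.ofReal (1-t) * volume X := by
      rw [Measure.addHaar_smul]
      congr 2
      rw [Module.finrank_self, pow_one, abs_of_pos ht']
    have hvolY : volume (t • Y) = ENNReal.ofReal t * volume Y := by
      rw [Measure.addHaar_smul]
      congr 2
      rw [Module.finrank_self, pow_one, abs_of_pos ht]
    calc ENNReal.ofReal (1-t) * F (c₁/C*s) + ENNReal.ofReal t * G (c₂/C*s)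
        = volume ((1-t) • X) + volume (t • Y) := by rw [hvolX, hvolY]
      _ ≤ volume ((1-t) • X + t • Y) :=
          oneDim_BM _ _ hX'm hY'm (hXne.smul_set) (hYne.smul_set)
      _ ≤ volume {x | ENNReal.ofReal s < h x} := measure_mono hsub
  -- integration
  have hint : ENNReal.ofReal (1-t) * (ENNReal.ofReal (C/c₁) * If)
      + ENNReal.ofReal t * (ENNReal.ofReal (C/c₂) * Ig) ≤ ∫⁻ x, h x := by
    have step1 : ∫⁻ x, min (h x) (ENNReal.ofReal C) ≤ ∫⁻ x, h x :=
      lintegral_mono fun x => min_le_left _ _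
    have step2 : ∫⁻ x, min (h x) (ENNReal.ofReal C)
        = ∫⁻ s in Ioo 0 C, volume {x | ENNReal.ofReal s < h x} :=
      trunc_layercake volume h hh hC
    have hintegrand_m : Measurable fun s : ℝ =>
        ENNReal.ofReal (1-t) * F (c₁/C*s) + ENNReal.ofReal t * G (c₂/C*s) :=
      ((hFm.comp (measurable_const_mul _)).const_mul _).add
        ((hGm.comp (measurable_const_mul _)).const_mul _)
    have step3 : ∫⁻ s in Ioo 0 C,
        (ENNReal.ofReal (1-t) * F (c₁/C*s) + ENNReal.ofReal t * G (c₂/C*s))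
          ≤ ∫⁻ s in Ioo 0 C, volume {x | ENNReal.ofReal s < h x} := by
      have hanti : Antitone (fun s : ℝ => volume {x | ENNReal.ofReal s < h x}) :=
        fun σ σ' hσ => measure_mono fun x hx =>
          lt_of_le_of_lt (ENNReal.ofReal_le_ofReal hσ) hx
      exact setLIntegral_mono hanti.measurable key
    have step4 : ∫⁻ s in Ioo 0 C,
        (ENNReal.ofReal (1-t) * F (c₁/C*s) + ENNReal.ofReal t * G (c₂/C*s))
        = ENNReal.ofReal (1-t) * (∫⁻ s in Ioo 0 C, F (c₁/C*s))
          + ENNReal.ofReal t * (∫⁻ s in Ioo 0 C, G (c₂/C*s)) := by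
      have hm1 : Measurable fun s : ℝ => F (c₁/C*s) := hFm.comp (measurable_const_mul _)
      have hm2 : Measurable fun s : ℝ => G (c₂/C*s) := hGm.comp (measurable_const_mul _)
      rw [lintegral_add_left (hm1.const_mul _), lintegral_const_mul _ hm1,
        lintegral_const_mul _ hm2]
    have hFsub : (∫⁻ s in Ioo 0 C, F (c₁/C*s)) = ENNReal.ofReal (C/c₁) * If := by
      rw [subst_Ioo F hFm (by positivity) hC, div_mul_cancel₀ _ (ne_of_gt hC), inv_div,
        hIf, trunc_layercake volume f hf hc₁]
    have hGsub : (∫⁻ s in Ioo 0 C, G (c₂/C*s)) = ENNReal.ofReal (C/c₂) * Ig := by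
      rw [subst_Ioo G hGm (by positivity) hC, div_mul_cancel₀ _ (ne_of_gt hC), inv_div,
        hIg, trunc_layercake volume g hg hc₂]
    rw [← hFsub, ← hGsub, ← step4]
    exact le_trans step3 (le_trans (le_of_eq step2.symm) step1)
  -- conclude via AM-GM
  have hgm := ennreal_geom_mean (ENNReal.ofReal (C/c₁) * If) (ENNReal.ofReal (C/c₂) * Ig) ht ht1
  refine le_trans (le_of_eq ?_) (le_trans hgm hint)
  rw [ENNReal.mul_rpow_of_nonneg _ _ ht'.le, ENNReal.mul_rpow_of_nonneg _ _ ht.le,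
    ENNReal.ofReal_rpow_of_pos (by positivity), ENNReal.ofReal_rpow_of_pos (by positivity)]
  have hone : (C/c₁) ^ (1-t) * (C/c₂) ^ t = 1 := by
    rw [Real.div_rpow hC.le hc₁.le, Real.div_rpow hC.le hc₂.le, div_mul_div_comm]
    have hnum : C ^ (1-t) * C ^ t = C := by
      rw [← Real.rpow_add hC]
      norm_num
    rw [hnum, ← hCdef, div_self (ne_of_gt hC)]
  calc If ^ (1-t) * Ig ^ t
      = (ENNReal.ofReal ((C/c₁) ^ (1-t)) * ENNReal.ofReal ((C/c₂) ^ t)) * (If ^ (1-t) * Ig ^ t) := by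
        rw [← ENNReal.ofReal_mul (by positivity), hone]
        simp
    _ = ENNReal.ofReal ((C/c₁) ^ (1-t)) * If ^ (1-t) * (ENNReal.ofReal ((C/c₂) ^ t) * Ig ^ t) := by
        ring

/-- The Prékopa-Leindler property for a measure on a real vector space. -/
def PLP (E : Type*) [MeasurableSpace E] [AddCommMonoid E] [Module ℝ E]
    (μ : MeasureTheory.Measure E) (t : ℝ) : Prop :=
  ∀ f g h : E → ℝ≥0∞, Measurable f → Measurable g → Measurable h →
    (∀ x y, f x ^ (1-t) * g y ^ t ≤ h ((1-t) • x + t • y)) →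
    (∫⁻ x, f x ∂μ) ^ (1-t) * (∫⁻ x, g x ∂μ) ^ t ≤ ∫⁻ x, h x ∂μ

lemma iSup_min_ofReal_nat (a : ℝ≥0∞) : ⨆ k : ℕ, min a (ENNReal.ofReal ((k:ℝ)+1)) = a := by
  rcases eq_or_ne a ⊤ with rfl | ha
  · simp only [min_top_left, top_le_iff]
    rw [eq_top_iff]
    calc (⊤:ℝ≥0∞) = ⨆ k : ℕ, (k:ℝ≥0∞) := ENNReal.iSup_natCast.symm
      _ ≤ ⨆ k : ℕ, min ⊤ (ENNReal.ofReal ((k:ℝ)+1)) := by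
          refine iSup_mono fun k => ?_
          rw [min_eq_right le_top, ← ENNReal.ofReal_natCast k]
          exact ENNReal.ofReal_le_ofReal (by linarith)
  · obtain ⟨k, hk⟩ := exists_nat_gt a.toReal
    apply le_antisymm (iSup_le fun k => min_le_left _ _)
    refine le_iSup_of_le k (le_of_eq (min_eq_left ?_).symm)
    rw [← ENNReal.ofReal_toReal ha]
    exact ENNReal.ofReal_le_ofReal (by linarith)

lemma trunc_sup_lintegral {φ : ℝ → ℝ≥0∞} (hφ : Measurable φ) (hS : (⨆ x, φ x) ≠ 0) :
    ∃ c : ℕ → ℝ, (∀ k, 0 < c k ∧ ENNReal.ofReal (c k) ≤ ⨆ x, φ x) ∧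
      (⨆ k, ∫⁻ x, min (φ x) (ENNReal.ofReal (c k))) = ∫⁻ x, φ x := by
  rcases eq_or_ne (⨆ x, φ x) ⊤ with hT | hT
  · refine ⟨fun k => (k:ℝ) + 1, fun k => ⟨by positivity, by simp [hT]⟩, ?_⟩
    have hmono : Monotone fun (k:ℕ) (x:ℝ) => min (φ x) (ENNReal.ofReal ((k:ℝ)+1)) := by
      intro k l hkl x
      have : ((k:ℝ)+1) ≤ (l:ℝ)+1 := by
        have := (Nat.cast_le (α := ℝ)).mpr hkl
        linarith
      exact min_le_min le_rfl (ENNReal.ofReal_le_ofReal this)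
    rw [← lintegral_iSup (fun k => hφ.min measurable_const) hmono]
    congr 1
    funext x
    exact iSup_min_ofReal_nat (φ x)
  · refine ⟨fun _ => (⨆ x, φ x).toReal,
      fun k => ⟨ENNReal.toReal_pos hS hT, by rw [ENNReal.ofReal_toReal hT]⟩, ?_⟩
    have hmin : ∀ x, min (φ x) (ENNReal.ofReal ((⨆ x, φ x).toReal)) = φ x := by
      intro x
      rw [ENNReal.ofReal_toReal hT]
      exact min_eq_left (le_iSup φ x)
    simp only [hmin, ciSup_const]

lemma PLP_real {t : ℝ} (ht : 0 < t) (ht1 : t < 1) : PLP ℝ volume t := by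
  intro f g h hf hg hh hyp
  have ht' : (0:ℝ) < 1 - t := by linarith
  rcases eq_or_ne (⨆ x, f x) 0 with hSf | hSf
  · have hf0 : ∀ x, f x = 0 := fun x => le_antisymm (hSf ▸ le_iSup f x) zero_le
    have : (∫⁻ x, f x) = 0 := by simp [hf0]
    rw [this, ENNReal.zero_rpow_of_pos ht', zero_mul]
    exact zero_le
  rcases eq_or_ne (⨆ x, g x) 0 with hSg | hSg
  · have hg0 : ∀ x, g x = 0 := fun x => le_antisymm (hSg ▸ le_iSup g x) zero_le
    have : (∫⁻ x, g x) = 0 := by simp [hg0]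
    rw [this, ENNReal.zero_rpow_of_pos ht, mul_zero]
    exact zero_le
  obtain ⟨cf, hcf, hcfsup⟩ := trunc_sup_lintegral hf hSf
  obtain ⟨cg, hcg, hcgsup⟩ := trunc_sup_lintegral hg hSg
  have hyp' : ∀ x y : ℝ, f x ^ (1-t) * g y ^ t ≤ h ((1-t) * x + t * y) := by
    intro x y
    simpa [smul_eq_mul] using hyp x y
  calc (∫⁻ x, f x) ^ (1-t) * (∫⁻ x, g x) ^ t
      = (⨆ j, ∫⁻ x, min (f x) (ENNReal.ofReal (cf j))) ^ (1-t)
        * (⨆ k, ∫⁻ x, min (g x) (ENNReal.ofReal (cg k))) ^ t := by rw [hcfsup, hcgsup]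
    _ = (⨆ j, (∫⁻ x, min (f x) (ENNReal.ofReal (cf j))) ^ (1-t))
        * (⨆ k, (∫⁻ x, min (g x) (ENNReal.ofReal (cg k))) ^ t) := by
        rw [← ENNReal.orderIsoRpow_apply (1-t) ht', OrderIso.map_iSup,
          ← ENNReal.orderIsoRpow_apply t ht, OrderIso.map_iSup]
        simp only [ENNReal.orderIsoRpow_apply]
    _ = ⨆ j, ⨆ k, (∫⁻ x, min (f x) (ENNReal.ofReal (cf j))) ^ (1-t)
        * (∫⁻ x, min (g x) (ENNReal.ofReal (cg k))) ^ t := by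
        rw [ENNReal.iSup_mul]
        congr 1
        funext j
        rw [ENNReal.mul_iSup]
    _ ≤ ∫⁻ x, h x := by
        refine iSup_le fun j => iSup_le fun k => ?_
        exact oneDim_PL_core ht ht1 f g h hf hg hh hyp' (hcf j).1 (hcg k).1
          (hcf j).2 (hcg k).2

lemma PLP_transfer {E F : Type*} [MeasurableSpace E] [AddCommMonoid E] [Module ℝ E]
    [MeasurableSpace F] [AddCommMonoid F] [Module ℝ F] {μ : Measure E} {ν : Measure F}
    {φ : E → F} (hmp : MeasurePreserving φ μ ν)
    (hlin : ∀ (a b : ℝ) (x y : E), φ (a • x + b • y) = a • φ x + b • φ y)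
    {t : ℝ} (hE : PLP E μ t) : PLP F ν t := by
  intro f g h hf hg hh hyp
  have key := hE (f ∘ φ) (g ∘ φ) (h ∘ φ) (hf.comp hmp.measurable) (hg.comp hmp.measurable)
    (hh.comp hmp.measurable) ?_
  · rw [← hmp.lintegral_comp hf, ← hmp.lintegral_comp hg, ← hmp.lintegral_comp hh]
    exact key
  · intro x y
    show f (φ x) ^ (1-t) * g (φ y) ^ t ≤ h (φ ((1-t) • x + t • y))
    rw [hlin]
    exact hyp (φ x) (φ y)

lemma PLP_prod {E : Type*} [MeasurableSpace E] [AddCommMonoid E] [Module ℝ E]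
    (μ : Measure E) [SFinite μ] {t : ℝ} (ht : 0 < t) (ht1 : t < 1)
    (hE : PLP E μ t) : PLP (E × ℝ) (μ.prod volume) t := by
  intro f g h hf hg hh hyp
  set F : ℝ → ℝ≥0∞ := fun a => ∫⁻ x, f (x, a) ∂μ with hFdef
  set G : ℝ → ℝ≥0∞ := fun a => ∫⁻ x, g (x, a) ∂μ with hGdef
  set H : ℝ → ℝ≥0∞ := fun a => ∫⁻ x, h (x, a) ∂μ with hHdef
  have hFm : Measurable F := hf.lintegral_prod_left'
  have hGm : Measurable G := hg.lintegral_prod_left'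
  have hHm : Measurable H := hh.lintegral_prod_left'
  have hyp1 : ∀ a b : ℝ, F a ^ (1-t) * G b ^ t ≤ H ((1-t) • a + t • b) := by
    intro a b
    refine hE (fun x => f (x, a)) (fun y => g (y, b)) (fun z => h (z, (1-t) • a + t • b))
      (hf.comp (measurable_id.prodMk measurable_const))
      (hg.comp (measurable_id.prodMk measurable_const))
      (hh.comp (measurable_id.prodMk measurable_const)) ?_
    intro x y
    have := hyp (x, a) (y, b)
    simpa [Prod.smul_mk, Prod.mk_add_mk] using this
  have h1D := PLP_real ht ht1 F G H hFm hGm hHm hyp1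
  rw [lintegral_prod_symm f hf.aemeasurable, lintegral_prod_symm g hg.aemeasurable,
    lintegral_prod_symm h hh.aemeasurable]
  exact h1D

lemma insertNth_smul {n : ℕ} (i : Fin (n+1)) (c : ℝ) (x : ℝ) (p : Fin n → ℝ) :
    (Fin.insertNth (α := fun _ => ℝ) i (c • x) (c • p)) = c • (Fin.insertNth (α := fun _ => ℝ) i x p) := by
  funext j
  refine Fin.succAboveCases i ?_ ?_ j
  · simp
  · intro k
    simp

lemma PLP_pi (n : ℕ) (hn : 1 ≤ n) {t : ℝ} (ht : 0 < t) (ht1 : t < 1) :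
    PLP (Fin n → ℝ) volume t := by
  induction n, hn using Nat.le_induction with
  | base =>
    refine PLP_transfer (φ := ⇑(MeasurableEquiv.funUnique (Fin 1) ℝ).symm)
      (MeasureTheory.volume_preserving_funUnique (Fin 1) ℝ).symm ?_ (PLP_real ht ht1)
    intro a b x y
    funext j
    rfl
  | succ n hn ih =>
    have hstep : PLP ((Fin n → ℝ) × ℝ) (volume.prod volume) t := PLP_prod volume ht ht1 ih
    set e := (MeasurableEquiv.piFinSuccAbove (fun _ : Fin (n+1) => ℝ) (Fin.last n)).symm
    have hswap : MeasurePreserving (Prod.swap : (Fin n → ℝ) × ℝ → ℝ × (Fin n → ℝ))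
        (volume.prod volume) (volume.prod volume) := Measure.measurePreserving_swap
    have hmp : MeasurePreserving (⇑e ∘ Prod.swap) (volume.prod volume) volume := by
      refine MeasurePreserving.comp ?_ hswap
      have h1 := (volume_preserving_piFinSuccAbove (fun _ : Fin (n+1) => ℝ) (Fin.last n)).symm
      rw [Measure.volume_eq_prod] at h1
      exact h1
    refine PLP_transfer hmp ?_ hstep
    intro a b x y
    show e (Prod.swap (a • x + b • y)) = a • e (Prod.swap x) + b • e (Prod.swap y)
    have he : ∀ p : ℝ × (Fin n → ℝ), e p = (Fin.last n).insertNth p.1 p.2 := fun _ => rfl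
    rw [he, he, he]
    simp only [Prod.swap, Prod.fst_add, Prod.snd_add, Prod.smul_fst, Prod.smul_snd]
    rw [Fin.insertNth_add, ← insertNth_smul, ← insertNth_smul]

lemma PLP_euclidean (n : ℕ) (hn : 1 ≤ n) {t : ℝ} (ht : 0 < t) (ht1 : t < 1) :
    PLP (EuclideanSpace ℝ (Fin n)) volume t := by
  refine PLP_transfer (φ := ⇑(MeasurableEquiv.toLp 2 (Fin n → ℝ)))
    (EuclideanSpace.volume_preserving_symm_measurableEquiv_toLp (Fin n)).symm ?_ (PLP_pi n hn ht ht1)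
  intro a b x y
  rfl

lemma real_bm_calc {n : ℕ} (hn : 1 ≤ n) {A B : ℝ} (hA : 0 < A) (hB : 0 < B) :
    (A ^ (1/(n:ℝ)) + B ^ (1/(n:ℝ))) ^ (n:ℝ)
      = (((1 - B ^ (1/(n:ℝ)) / (A ^ (1/(n:ℝ)) + B ^ (1/(n:ℝ))))⁻¹)^n * A)
          ^ (1 - B ^ (1/(n:ℝ)) / (A ^ (1/(n:ℝ)) + B ^ (1/(n:ℝ))))
        * (((B ^ (1/(n:ℝ)) / (A ^ (1/(n:ℝ)) + B ^ (1/(n:ℝ))))⁻¹)^n * B)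
          ^ (B ^ (1/(n:ℝ)) / (A ^ (1/(n:ℝ)) + B ^ (1/(n:ℝ)))) := by
  have hn0 : (n:ℝ) ≠ 0 := Nat.cast_ne_zero.mpr (by omega)
  set a := A ^ (1/(n:ℝ)) with hadef
  set b := B ^ (1/(n:ℝ)) with hbdef
  have hapos : 0 < a := Real.rpow_pos_of_pos hA _
  have hbpos : 0 < b := Real.rpow_pos_of_pos hB _
  set s := a + b with hsdef
  have hspos : 0 < s := by positivity
  set t := b / s with htdef
  have h1t : 1 - t = a / s := by
    rw [htdef, eq_div_iff (ne_of_gt hspos), sub_mul, one_mul,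
      div_mul_cancel₀ _ (ne_of_gt hspos), hsdef]
    ring
  have hApow : a ^ n = A := by
    rw [hadef, one_div, Real.rpow_inv_natCast_pow hA.le (by omega)]
  have hBpow : b ^ n = B := by
    rw [hbdef, one_div, Real.rpow_inv_natCast_pow hB.le (by omega)]
  have hX : ((1-t)⁻¹)^n * A = s^n := by
    rw [h1t, ← hApow, inv_div, ← mul_pow, div_mul_cancel₀ _ (ne_of_gt hapos)]
  have hY : (t⁻¹)^n * B = s^n := by
    rw [htdef, ← hBpow, inv_div, ← mul_pow, div_mul_cancel₀ _ (ne_of_gt hbpos)]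
  rw [hX, hY, ← Real.rpow_natCast s n, ← Real.rpow_mul hspos.le, ← Real.rpow_mul hspos.le,
    ← Real.rpow_add hspos]
  congr 1
  ring

theorem brunn_minkowski {n : ℕ} (hn : 1 ≤ n) (S T : Set (EuclideanSpace ℝ (Fin n)))
    (hS : MeasurableSet S) (hT : MeasurableSet T) (hS0 : volume S ≠ 0) (hT0 : volume T ≠ 0)
    (hSf : volume S ≠ ⊤) (hTf : volume T ≠ ⊤) :
    (volume S ^ (1/(n:ℝ)) + volume T ^ (1/(n:ℝ))) ^ (n:ℝ) ≤ volume (S + T) := by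
  have hn0 : (n:ℝ) ≠ 0 := Nat.cast_ne_zero.mpr (by omega)
  set A := (volume S).toReal with hAdef
  set B := (volume T).toReal with hBdef
  have hA : 0 < A := ENNReal.toReal_pos hS0 hSf
  have hB : 0 < B := ENNReal.toReal_pos hT0 hTf
  set a := A ^ (1/(n:ℝ)) with hadef
  set b := B ^ (1/(n:ℝ)) with hbdef
  have hapos : 0 < a := Real.rpow_pos_of_pos hA _
  have hbpos : 0 < b := Real.rpow_pos_of_pos hB _
  set t := b / (a + b) with htdef
  have ht : 0 < t := by positivity
  have ht1 : t < 1 := by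
    rw [htdef, div_lt_one (by positivity)]
    linarith
  have ht' : (0:ℝ) < 1 - t := by linarith
  -- the functions
  set S' := (1-t)⁻¹ • S with hS'def
  set T' := t⁻¹ • T with hT'def
  have hS'm : MeasurableSet S' := hS.const_smul₀ ((1-t)⁻¹)
  have hT'm : MeasurableSet T' := hT.const_smul₀ (t⁻¹)
  set U := toMeasurable volume (S + T) with hUdef
  set f : EuclideanSpace ℝ (Fin n) → ℝ≥0∞ := S'.indicator 1 with hfdef
  set g : EuclideanSpace ℝ (Fin n) → ℝ≥0∞ := T'.indicator 1 with hgdef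
  set h : EuclideanSpace ℝ (Fin n) → ℝ≥0∞ := U.indicator 1 with hhdef
  have hfm : Measurable f := measurable_one.indicator hS'm
  have hgm : Measurable g := measurable_one.indicator hT'm
  have hhm : Measurable h := measurable_one.indicator (measurableSet_toMeasurable _ _)
  have hyp : ∀ x y, f x ^ (1-t) * g y ^ t ≤ h ((1-t) • x + t • y) := by
    intro x y
    by_cases hx : x ∈ S'
    · by_cases hy : y ∈ T'
      · have hmem : (1-t) • x + t • y ∈ U := by
          apply subset_toMeasurable
          obtain ⟨x0, hx0, rfl⟩ := hx
          obtain ⟨y0, hy0, rfl⟩ := hy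
          rw [smul_smul, smul_smul, mul_inv_cancel₀ (ne_of_gt ht'), mul_inv_cancel₀ (ne_of_gt ht),
            one_smul, one_smul]
          exact add_mem_add hx0 hy0
        rw [hfdef, hgdef, hhdef]
        simp only [indicator_of_mem hx, indicator_of_mem hy, indicator_of_mem hmem, Pi.one_apply]
        rw [ENNReal.one_rpow, ENNReal.one_rpow, one_mul]
      · rw [hgdef]
        simp only [indicator_of_notMem hy]
        rw [ENNReal.zero_rpow_of_pos ht, mul_zero]
        exact zero_le
    · rw [hfdef]
      simp only [indicator_of_notMem hx]
      rw [ENNReal.zero_rpow_of_pos ht', zero_mul]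
      exact zero_le
  have key := PLP_euclidean n hn ht ht1 f g h hfm hgm hhm hyp
  rw [hfdef, hgdef, hhdef, lintegral_indicator_one hS'm, lintegral_indicator_one hT'm,
    lintegral_indicator_one (measurableSet_toMeasurable _ _)] at key
  rw [measure_toMeasurable] at key
  have hvolS' : volume S' = ENNReal.ofReal (((1-t)⁻¹)^n * A) := by
    rw [hS'def, Measure.addHaar_smul, finrank_euclideanSpace_fin,
      abs_of_pos (by positivity : (0:ℝ) < ((1-t)⁻¹)^n),
      ENNReal.ofReal_mul (by positivity), hAdef, ENNReal.ofReal_toReal hSf]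
  have hvolT' : volume T' = ENNReal.ofReal ((t⁻¹)^n * B) := by
    rw [hT'def, Measure.addHaar_smul, finrank_euclideanSpace_fin,
      abs_of_pos (by positivity : (0:ℝ) < (t⁻¹)^n),
      ENNReal.ofReal_mul (by positivity), hBdef, ENNReal.ofReal_toReal hTf]
  rw [hvolS', hvolT'] at key
  refine le_trans (le_of_eq ?_) key
  rw [ENNReal.ofReal_rpow_of_pos (by positivity), ENNReal.ofReal_rpow_of_pos (by positivity),
    ← ENNReal.ofReal_mul (by positivity)]
  have hcalc := real_bm_calc hn hA hB
  rw [← hadef, ← hbdef, ← htdef] at hcalc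
  rw [← hcalc]
  have hvS : volume S = ENNReal.ofReal A := (ENNReal.ofReal_toReal hSf).symm
  have hvT : volume T = ENNReal.ofReal B := (ENNReal.ofReal_toReal hTf).symm
  rw [hvS, hvT, ENNReal.ofReal_rpow_of_pos hA, ENNReal.ofReal_rpow_of_pos hB,
    ← ENNReal.ofReal_add (by positivity) (by positivity),
    ENNReal.ofReal_rpow_of_pos (by positivity)]


lemma nontrivial_edim {n : ℕ} (hn : 1 ≤ n) : Nontrivial (Edim n) := by
  apply Module.nontrivial_of_finrank_pos (R := ℝ)
  rw [finrank_euclideanSpace_fin]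
  omega

lemma measurableSet_hslice {n : ℕ} {A : Set (Sp n)} (hA : MeasurableSet A) (t : ℝ) :
    MeasurableSet (hslice A t) := measurable_prodMk_right hA

lemma schwarz_subset_schwarz {n : ℕ} {A B : Set (Sp n)}
    (h : ∀ t, volume (hslice A t) ≤ volume (hslice B t)) : schwarz A ⊆ schwarz B :=
  fun p hp => lt_of_lt_of_le hp (h p.2)

lemma slice_vol_le {n : ℕ} (hn : 1 ≤ n) (a : ℝ≥0∞) :
    volume {x : Edim n | volume (Metric.ball (0 : Edim n) ‖x‖) < a} ≤ a := by
  have hnt : Nontrivial (Edim n) := nontrivial_edim hn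
  rcases eq_or_ne a ⊤ with rfl | ha
  · exact le_top
  set c := volume (Metric.ball (0:Edim n) 1) with hc
  have hc0 : c ≠ 0 := (Metric.measure_ball_pos volume 0 one_pos).ne'
  have hcT : c ≠ ⊤ := measure_ball_lt_top.ne
  have hdivT : a / c ≠ ⊤ := (ENNReal.div_lt_top ha hc0).ne
  set r := ((a/c).toReal) ^ (1/(n:ℝ)) with hr
  have hrn : 0 ≤ r := Real.rpow_nonneg ENNReal.toReal_nonneg _
  have hsub : {x : Edim n | volume (Metric.ball (0:Edim n) ‖x‖) < a}
      ⊆ Metric.closedBall 0 r := by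
    intro x hx
    simp only [mem_setOf_eq] at hx
    rw [Measure.addHaar_ball _ _ (norm_nonneg x), finrank_euclideanSpace_fin] at hx
    have h1 : ENNReal.ofReal (‖x‖^n) < a / c :=
      (ENNReal.lt_div_iff_mul_lt (Or.inl hc0) (Or.inl hcT)).mpr hx
    have h2 : ‖x‖^n < (a/c).toReal :=
      (ENNReal.ofReal_lt_iff_lt_toReal (by positivity) hdivT).mp h1
    have h3 : ‖x‖ ≤ r := by
      calc ‖x‖ = (‖x‖^n) ^ ((n:ℝ))⁻¹ :=
            (Real.pow_rpow_inv_natCast (norm_nonneg x) (by omega)).symm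
        _ ≤ r := by
            rw [hr, one_div]
            exact Real.rpow_le_rpow (by positivity) h2.le (by positivity)
    exact Metric.mem_closedBall.mpr (by simpa using h3)
  calc volume {x : Edim n | volume (Metric.ball (0:Edim n) ‖x‖) < a}
      ≤ volume (Metric.closedBall (0:Edim n) r) := measure_mono hsub
    _ = ENNReal.ofReal (r^n) * c := by
        rw [Measure.addHaar_closedBall _ _ hrn, finrank_euclideanSpace_fin]
    _ = a := by
        rw [hr, one_div, Real.rpow_inv_natCast_pow ENNReal.toReal_nonneg (by omega),
          ENNReal.ofReal_toReal hdivT, ENNReal.div_mul_cancel hc0 hcT]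

lemma volume_schwarz_le {n : ℕ} (hn : 1 ≤ n) {H : Set (Sp n)} (hH : MeasurableSet H) :
    volume (schwarz H) ≤ volume H := by
  have hnt : Nontrivial (Edim n) := nontrivial_edim hn
  have hfm : Measurable fun t : ℝ => volume (hslice H t) := by
    have := Measure.volume_eq_prod (Edim n) ℝ
    exact measurable_measure_prodMk_right hH
  have hgm : Measurable fun x : Edim n => volume (Metric.ball (0:Edim n) ‖x‖) := by
    have heq : (fun x : Edim n => volume (Metric.ball (0:Edim n) ‖x‖))
        = fun x => ENNReal.ofReal (‖x‖^n) * volume (Metric.ball (0:Edim n) 1) := by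
      funext x
      rw [Measure.addHaar_ball _ _ (norm_nonneg x), finrank_euclideanSpace_fin]
    rw [heq]
    exact ((measurable_norm.pow_const n).ennreal_ofReal).mul_const _
  have hsm : MeasurableSet (schwarz H) := by
    have heq : schwarz H = {p : Sp n |
        (fun x : Edim n => volume (Metric.ball (0:Edim n) ‖x‖)) p.1
          < (fun t : ℝ => volume (hslice H t)) p.2} := rfl
    rw [heq]
    exact measurableSet_lt (hgm.comp measurable_fst) (hfm.comp measurable_snd)
  have hVP := Measure.volume_eq_prod (Edim n) ℝ
  calc volume (schwarz H) = ∫⁻ t, volume ((fun x : Edim n => (x, t)) ⁻¹' (schwarz H)) :=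
        hVP ▸ (Measure.prod_apply_symm (μ := volume) (ν := volume) hsm)
    _ ≤ ∫⁻ t, volume ((fun x : Edim n => (x, t)) ⁻¹' H) := ?_
    _ = volume H :=
        hVP ▸ (Measure.prod_apply_symm (μ := volume) (ν := volume) hH).symm
  refine lintegral_mono fun t => ?_
  have heq : (fun x : Edim n => (x, t)) ⁻¹' (schwarz H)
      = {x : Edim n | volume (Metric.ball (0:Edim n) ‖x‖) < volume (hslice H t)} := rfl
  rw [heq]
  exact slice_vol_le hn _

lemma ball_root {n : ℕ} (hn : 1 ≤ n) {r : ℝ} (hr : 0 ≤ r) :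
    (volume (Metric.ball (0 : Edim n) r)) ^ (1/(n:ℝ))
      = ENNReal.ofReal r * (volume (Metric.ball (0 : Edim n) 1)) ^ (1/(n:ℝ)) := by
  have hnt : Nontrivial (Edim n) := nontrivial_edim hn
  have hn0 : (n:ℝ) ≠ 0 := Nat.cast_ne_zero.mpr (by omega)
  rw [Measure.addHaar_ball _ _ hr, finrank_euclideanSpace_fin,
    ENNReal.mul_rpow_of_nonneg _ _ (by positivity), ENNReal.ofReal_pow hr,
    ← ENNReal.rpow_natCast (ENNReal.ofReal r) n, ← ENNReal.rpow_mul,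
    mul_one_div, div_self hn0, ENNReal.rpow_one]

lemma schwarz_add_subset {n : ℕ} (hn : 1 ≤ n) {A B : Set (Sp n)}
    (hA : MeasurableSet A) (hB : MeasurableSet B) :
    schwarz A + schwarz B ⊆ schwarz (A + B) := by
  have hnt : Nontrivial (Edim n) := nontrivial_edim hn
  have hn0 : (n:ℝ) ≠ 0 := Nat.cast_ne_zero.mpr (by omega)
  have hnpos : (0:ℝ) < 1/(n:ℝ) := by positivity
  rintro _ ⟨p, hp, q, hq, rfl⟩
  have hp' : volume (Metric.ball (0:Edim n) ‖p.1‖) < volume (hslice A p.2) := hp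
  have hq' : volume (Metric.ball (0:Edim n) ‖q.1‖) < volume (hslice B q.2) := hq
  set S := hslice A p.2 with hSdef
  set T := hslice B q.2 with hTdef
  have hSm : MeasurableSet S := measurableSet_hslice hA p.2
  have hTm : MeasurableSet T := measurableSet_hslice hB q.2
  have hS0 : volume S ≠ 0 := (lt_of_le_of_lt zero_le hp').ne'
  have hT0 : volume T ≠ 0 := (lt_of_le_of_lt zero_le hq').ne'
  have hsub : S + T ⊆ hslice (A + B) (p.2 + q.2) := by
    rintro _ ⟨x, hx, y, hy, rfl⟩
    exact ⟨(x, p.2), hx, (y, q.2), hy, rfl⟩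
  show volume (Metric.ball (0:Edim n) ‖(p+q).1‖) < volume (hslice (A+B) (p+q).2)
  have hfin : volume (Metric.ball (0:Edim n) ‖(p+q).1‖) < ⊤ := measure_ball_lt_top
  refine lt_of_lt_of_le ?_ (measure_mono hsub)
  rcases eq_or_ne (volume S) ⊤ with hSf | hSf
  · obtain ⟨y0, hy0⟩ := nonempty_of_measure_ne_zero hT0
    have hsub2 : y0 +ᵥ S ⊆ S + T := by
      rintro _ ⟨x, hx, rfl⟩
      simpa [add_comm] using add_mem_add hx hy0
    have : volume (S + T) = ⊤ := by
      rw [eq_top_iff]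
      calc (⊤:ℝ≥0∞) = volume (y0 +ᵥ S) := by rw [measure_vadd, hSf]
        _ ≤ volume (S + T) := measure_mono hsub2
    rw [this]
    exact hfin
  rcases eq_or_ne (volume T) ⊤ with hTf | hTf
  · obtain ⟨x0, hx0⟩ := nonempty_of_measure_ne_zero hS0
    have hsub2 : x0 +ᵥ T ⊆ S + T := by
      rintro _ ⟨y, hy, rfl⟩
      exact add_mem_add hx0 hy
    have : volume (S + T) = ⊤ := by
      rw [eq_top_iff]
      calc (⊤:ℝ≥0∞) = volume (x0 +ᵥ T) := by rw [measure_vadd, hTf]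
        _ ≤ volume (S + T) := measure_mono hsub2
    rw [this]
    exact hfin
  have hbm := brunn_minkowski hn S T hSm hTm hS0 hT0 hSf hTf
  refine lt_of_lt_of_le ?_ hbm
  set r₁ := ‖p.1‖
  set r₂ := ‖q.1‖
  calc volume (Metric.ball (0:Edim n) ‖(p+q).1‖)
      ≤ volume (Metric.ball (0:Edim n) (r₁ + r₂)) :=
        measure_mono (Metric.ball_subset_ball (norm_add_le p.1 q.1))
    _ = ((volume (Metric.ball (0:Edim n) (r₁+r₂))) ^ (1/(n:ℝ))) ^ (n:ℝ) := by
        rw [← ENNReal.rpow_mul, one_div, inv_mul_cancel₀ hn0, ENNReal.rpow_one]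
    _ = ((volume (Metric.ball (0:Edim n) r₁)) ^ (1/(n:ℝ))
          + (volume (Metric.ball (0:Edim n) r₂)) ^ (1/(n:ℝ))) ^ (n:ℝ) := by
        rw [ball_root hn (by positivity), ball_root hn (norm_nonneg _),
          ball_root hn (norm_nonneg _), ENNReal.ofReal_add (norm_nonneg _) (norm_nonneg _),
          add_mul]
    _ < (volume S ^ (1/(n:ℝ)) + volume T ^ (1/(n:ℝ))) ^ (n:ℝ) := by
        refine ENNReal.rpow_lt_rpow ?_ (by positivity)
        exact ENNReal.add_lt_add (ENNReal.rpow_lt_rpow hp' hnpos)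
          (ENNReal.rpow_lt_rpow hq' hnpos)


/-- For Borel sets `A, B ⊆ ℝ^d` (`d ≥ 2`) of finite measure, `|A^* + B^*| ≤ |A + B|`,
where `A^*` is the Schwarz symmetrization. -/
theorem schwarz_sumset_measure_le
    (d : ℕ) (hd : 2 ≤ d) (A B : Set (Sp (d-1)))
    (hA : MeasurableSet A) (hB : MeasurableSet B)
    (hAfin : volume A < ⊤) (hBfin : volume B < ⊤) :
    volume (schwarz A + schwarz B) ≤ volume (A + B) := by
  have hn : 1 ≤ d - 1 := by omega
  calc volume (schwarz A + schwarz B)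
      ≤ volume (schwarz (toMeasurable volume (A+B))) := by
        refine measure_mono (subset_trans (schwarz_add_subset hn hA hB)
          (schwarz_subset_schwarz fun t => measure_mono fun x hx => ?_))
        exact subset_toMeasurable _ _ hx
    _ ≤ volume (toMeasurable volume (A+B)) :=
        volume_schwarz_le hn (measurableSet_toMeasurable _ _)
    _ = volume (A+B) := measure_toMeasurable _
end
end

section
/- Let d ≥ 2. For any Borel sets A, B ⊆ ℝ^d with finite Lebesgue measures, |A^⋆ + B^⋆| ≤ |A + B|, where A^⋆ denotes the Steiner symmetrization (here |·| of a sumset means outer Lebesgue measure). -/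
open MeasureTheory Set Pointwise Filter ENNReal

noncomputable section

/-- 1-D Brunn–Minkowski for compact sets. -/
lemma compact_sum_measure_aux (K L : Set ℝ) (hK : IsCompact K) (hL : IsCompact L)
    (hKne : K.Nonempty) (hLne : L.Nonempty) :
    volume K + volume L ≤ volume (K + L) := by
  set a := sSup K with ha
  set b := sInf L with hb
  have haK : a ∈ K := hK.sSup_mem hKne
  have hbL : b ∈ L := hL.sInf_mem hLne
  set K' := (fun y => y + b) '' K with hK'
  set L' := (fun y => a + y) '' L with hL'
  have hK'm : MeasurableSet K' := by
    rw [hK', image_add_right]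
    exact hK.measurableSet.preimage (measurable_add_const _)
  have hvolK : volume K' = volume K := by
    rw [hK', image_add_right, measure_preimage_add_right]
  have hvolL : volume L' = volume L := by
    rw [hL', image_add_left, measure_preimage_add]
  have hunion : K' ∪ L' ⊆ K + L := by
    rintro z (⟨k, hk, rfl⟩ | ⟨l, hl, rfl⟩)
    · exact add_mem_add hk hbL
    · exact add_mem_add haK hl
  have hinter : K' ∩ L' ⊆ {a + b} := by
    rintro z ⟨⟨k, hk, rfl⟩, ⟨l, hl, hz⟩⟩
    have h1 : k + b ≤ a + b := add_le_add_left (le_csSup hK.bddAbove hk) b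
    have hz' : a + l = k + b := hz
    have h2 : a + b ≤ k + b := by
      rw [← hz']; exact add_le_add_right (csInf_le hL.bddBelow hl) a
    exact le_antisymm h1 h2
  calc volume K + volume L = volume K' + volume L' := by rw [hvolK, hvolL]
    _ = volume (K' ∪ L') + volume (K' ∩ L') := (measure_union_add_inter' hK'm L').symm
    _ ≤ volume (K + L) + 0 := by
        refine add_le_add (measure_mono hunion) ?_
        calc volume (K' ∩ L') ≤ volume ({a + b} : Set ℝ) := measure_mono hinter
          _ = 0 := Real.volume_singleton
    _ = volume (K + L) := add_zero _

/-- 1-D Brunn–Minkowski: for nonempty measurable sets `s, t ⊆ ℝ`,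
`|s| + |t| ≤ |s + t|` (outer measure on the right). -/
lemma oneD_sum_measure (s t : Set ℝ) (hs : MeasurableSet s) (ht : MeasurableSet t)
    (hsne : s.Nonempty) (htne : t.Nonempty) :
    volume s + volume t ≤ volume (s + t) := by
  obtain ⟨a, ha⟩ := hsne
  obtain ⟨b, hb⟩ := htne
  by_cases hsf : volume s = ⊤
  · have hsub : (fun y => y + b) '' s ⊆ s + t := by
      rintro z ⟨y, hy, rfl⟩; exact add_mem_add hy hb
    have : volume ((fun y => y + b) '' s) = ⊤ := by
      rw [image_add_right, measure_preimage_add_right, hsf]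
    have htop : volume (s + t) = ⊤ := top_le_iff.mp (this ▸ measure_mono hsub)
    simp [htop]
  by_cases htf : volume t = ⊤
  · have hsub : (fun y => a + y) '' t ⊆ s + t := by
      rintro z ⟨y, hy, rfl⟩; exact add_mem_add ha hy
    have : volume ((fun y => a + y) '' t) = ⊤ := by
      rw [image_add_left, measure_preimage_add, htf]
    have htop : volume (s + t) = ⊤ := top_le_iff.mp (this ▸ measure_mono hsub)
    simp [htop]
  refine ENNReal.le_of_forall_pos_le_add fun ε hε _ => ?_
  have hε2 : (ε : ℝ≥0∞) / 2 ≠ 0 := by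
    simp [ENNReal.div_eq_zero_iff, hε.ne']
  obtain ⟨K, hKs, hKc, hKlt⟩ := hs.exists_isCompact_lt_add hsf hε2
  obtain ⟨L, hLt, hLc, hLlt⟩ := ht.exists_isCompact_lt_add htf hε2
  have hKs' : insert a K ⊆ s := insert_subset ha hKs
  have hLt' : insert b L ⊆ t := insert_subset hb hLt
  have hcs := compact_sum_measure_aux (insert a K) (insert b L)
    (hKc.insert a) (hLc.insert b) ⟨a, mem_insert a K⟩ ⟨b, mem_insert b L⟩
  have hsum_sub : insert a K + insert b L ⊆ s + t := add_subset_add hKs' hLt'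
  calc volume s + volume t
      ≤ (volume (insert a K) + ε / 2) + (volume (insert b L) + ε / 2) := by
        refine add_le_add ?_ ?_
        · exact le_trans hKlt.le (add_le_add_left (measure_mono (subset_insert a K)) _)
        · exact le_trans hLlt.le (add_le_add_left (measure_mono (subset_insert b L)) _)
    _ = (volume (insert a K) + volume (insert b L)) + (ε / 2 + ε / 2) := by ring
    _ ≤ volume (s + t) + ε := by
        rw [ENNReal.add_halves]
        exact add_le_add (le_trans hcs (measure_mono hsum_sub)) le_rfl

lemma vslice_eq_preimage {n : ℕ} (A : Set (Sp n)) (x : Edim n) :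
    vslice A x = Prod.mk x ⁻¹' A := rfl

/-- For Borel sets `A, B ⊆ ℝ^d` (`d ≥ 2`) of finite measure, `|A^⋆ + B^⋆| ≤ |A + B|`,
where `A^⋆` is the Steiner symmetrization. -/
theorem steiner_sumset_measure_le
    (d : ℕ) (hd : 2 ≤ d) (A B : Set (Sp (d-1)))
    (hA : MeasurableSet A) (hB : MeasurableSet B)
    (hAfin : volume A < ⊤) (hBfin : volume B < ⊤) :
    volume (steiner A + steiner B) ≤ volume (A + B) := by
  set T := toMeasurable volume (A + B) with hTdef
  have hTm : MeasurableSet T := measurableSet_toMeasurable _ _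
  have hABT : A + B ⊆ T := subset_toMeasurable _ _
  -- Step 1: steiner A + steiner B ⊆ steiner T
  have hsub : steiner A + steiner B ⊆ steiner T := by
    rintro p ⟨p₁, hp₁, p₂, hp₂, rfl⟩
    have hp₁' : ENNReal.ofReal (2 * |p₁.2|) < volume (vslice A p₁.1) := hp₁
    have hp₂' : ENNReal.ofReal (2 * |p₂.2|) < volume (vslice B p₂.1) := hp₂
    have hAm : MeasurableSet (vslice A p₁.1) := by
      rw [vslice_eq_preimage]; exact hA.preimage measurable_prodMk_left
    have hBm : MeasurableSet (vslice B p₂.1) := by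
      rw [vslice_eq_preimage]; exact hB.preimage measurable_prodMk_left
    have hAne : (vslice A p₁.1).Nonempty := by
      rw [nonempty_iff_ne_empty]
      intro h
      rw [h, measure_empty] at hp₁'
      exact (not_lt.mpr zero_le) hp₁'
    have hBne : (vslice B p₂.1).Nonempty := by
      rw [nonempty_iff_ne_empty]
      intro h
      rw [h, measure_empty] at hp₂'
      exact (not_lt.mpr zero_le) hp₂'
    have hslicesub : vslice A p₁.1 + vslice B p₂.1 ⊆ vslice T (p₁.1 + p₂.1) := by
      rintro y ⟨y₁, hy₁, y₂, hy₂, rfl⟩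
      have : (p₁.1 + p₂.1, y₁ + y₂) ∈ A + B := by
        have := add_mem_add (a := (p₁.1, y₁)) (b := (p₂.1, y₂)) hy₁ hy₂
        exact this
      exact hABT this
    have hchain : volume (vslice A p₁.1) + volume (vslice B p₂.1)
        ≤ volume (vslice T (p₁.1 + p₂.1)) :=
      le_trans (oneD_sum_measure _ _ hAm hBm hAne hBne) (measure_mono hslicesub)
    show ENNReal.ofReal (2 * |(p₁ + p₂).2|) < volume (vslice T ((p₁ + p₂).1))
    have habs : 2 * |p₁.2 + p₂.2| ≤ 2 * |p₁.2| + 2 * |p₂.2| := by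
      have := abs_add_le p₁.2 p₂.2
      nlinarith
    calc ENNReal.ofReal (2 * |(p₁ + p₂).2|)
        ≤ ENNReal.ofReal (2 * |p₁.2|) + ENNReal.ofReal (2 * |p₂.2|) := by
          rw [← ENNReal.ofReal_add (by positivity) (by positivity)]
          exact ENNReal.ofReal_le_ofReal habs
      _ < volume (vslice A p₁.1) + volume (vslice B p₂.1) :=
          ENNReal.add_lt_add hp₁' hp₂'
      _ ≤ volume (vslice T ((p₁ + p₂).1)) := hchain
  -- Step 2: steiner T is measurable
  have hmeas : Measurable (fun x : Edim (d-1) => volume (Prod.mk x ⁻¹' T)) :=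
    measurable_measure_prodMk_left hTm
  have hTst : MeasurableSet (steiner T) := by
    have h1 : Measurable (fun p : Sp (d-1) => ENNReal.ofReal (2 * |p.2|)) :=
      ENNReal.measurable_ofReal.comp ((measurable_snd.abs).const_mul 2)
    exact measurableSet_lt h1 (hmeas.comp measurable_fst)
  -- Step 3: volume (steiner T) = volume T
  have hfub : volume (steiner T) = volume T := by
    rw [show (volume : Measure (Sp (d-1))) = (volume : Measure (Edim (d-1))).prod volume from
      Measure.volume_eq_prod _ _, Measure.prod_apply hTst, Measure.prod_apply hTm]
    refine lintegral_congr fun x => ?_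
    have hpre : Prod.mk x ⁻¹' steiner T = {y : ℝ | ENNReal.ofReal (2 * |y|) < volume (vslice T x)} :=
      rfl
    rw [hpre]
    rcases eq_or_ne (volume (vslice T x)) ⊤ with htop | hfin
    · rw [htop]
      have : {y : ℝ | ENNReal.ofReal (2 * |y|) < ⊤} = univ := by
        ext y; simp only [mem_setOf_eq, mem_univ, iff_true]; exact ENNReal.ofReal_lt_top
      rw [this, ← vslice_eq_preimage, htop]
      simp
    · set r := (volume (vslice T x)).toReal with hr
      have hr0 : 0 ≤ r := ENNReal.toReal_nonneg
      have hvr : volume (vslice T x) = ENNReal.ofReal r := (ENNReal.ofReal_toReal hfin).symm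
      have hset : {y : ℝ | ENNReal.ofReal (2 * |y|) < volume (vslice T x)}
          = Ioo (-(r / 2)) (r / 2) := by
        ext y
        rw [mem_setOf_eq, hvr, ENNReal.ofReal_lt_ofReal_iff_of_nonneg (by positivity),
          mem_Ioo, ← abs_lt]
        constructor <;> intro h <;> linarith
      rw [hset, Real.volume_Ioo, ← vslice_eq_preimage, hvr]
      congr 1
      ring
  calc volume (steiner A + steiner B) ≤ volume (steiner T) := measure_mono hsub
    _ = volume T := hfub
    _ = volume (A + B) := measure_toMeasurable _
end
end

section
/- Let d ≥ 2 and let A, B ⊆ ℝ^d be Borel sets with finite Lebesgue measures. For every x ∈ ℝ^{d−1}, the slice of the sumset of Steiner symmetrizations satisfies (A^⋆ + B^⋆)_x = ⋃ {(A^⋆)_{x'} + (B^⋆)_{x''} : x' + x'' = x, |A_{x'}| > 0 and |B_{x''}| > 0}, and consequently |(A^⋆ + B^⋆)_x| = sup {|A_{x'}| + |B_{x''}| : x' + x'' = x, |A_{x'}| > 0 and |B_{x''}| > 0}, where the union is empty and the supremum is interpreted as 0 if no such pair (x', x'') exists. -/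
open MeasureTheory Set Pointwise Filter ENNReal

noncomputable section

/-- symmetric open "interval" of mass μ -/
def Smu (μ : ℝ≥0∞) : Set ℝ := {y | ENNReal.ofReal (2 * |y|) < μ}

lemma Smu_mono {μ ν : ℝ≥0∞} (h : μ ≤ ν) : Smu μ ⊆ Smu ν :=
  fun _ hy => lt_of_lt_of_le hy h

lemma vol_Smu (μ : ℝ≥0∞) : volume (Smu μ) = μ := by
  rcases eq_or_ne μ ⊤ with rfl | hμ
  · have : Smu ⊤ = Set.univ := Set.eq_univ_of_forall fun y => ENNReal.ofReal_lt_top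
    rw [this, Real.volume_univ]
  · have h0 : (0:ℝ) ≤ μ.toReal := ENNReal.toReal_nonneg
    have : Smu μ = Set.Ioo (-(μ.toReal/2)) (μ.toReal/2) := by
      ext y
      simp only [Smu, Set.mem_setOf_eq, Set.mem_Ioo]
      rw [ENNReal.ofReal_lt_iff_lt_toReal (by positivity) hμ]
      constructor
      · intro h
        have := abs_nonneg y
        constructor <;> cases abs_cases y <;> linarith
      · rintro ⟨h1, h2⟩
        cases abs_cases y <;> linarith
    rw [this, Real.volume_Ioo]
    rw [show μ.toReal/2 - -(μ.toReal/2) = μ.toReal by ring, ENNReal.ofReal_toReal hμ]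

lemma Smu_add {μ ν : ℝ≥0∞} (hμ : 0 < μ) (hν : 0 < ν) :
    Smu μ + Smu ν = Smu (μ + ν) := by
  ext y
  constructor
  · rintro ⟨y1, hy1, y2, hy2, rfl⟩
    have h1 : ENNReal.ofReal (2 * |y1 + y2|) ≤
        ENNReal.ofReal (2 * |y1|) + ENNReal.ofReal (2 * |y2|) := by
      rw [← ENNReal.ofReal_add (by positivity) (by positivity)]
      apply ENNReal.ofReal_le_ofReal
      have := abs_add_le y1 y2
      linarith
    exact lt_of_le_of_lt h1 (ENNReal.add_lt_add hy1 hy2)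
  · intro hy
    rcases eq_or_ne μ ⊤ with rfl | hμ'
    · refine ⟨y, ?_, 0, ?_, by ring⟩
      · exact ENNReal.ofReal_lt_top
      · simpa [Smu] using hν
    rcases eq_or_ne ν ⊤ with rfl | hν'
    · refine ⟨0, ?_, y, ?_, by ring⟩
      · simpa [Smu] using hμ
      · exact ENNReal.ofReal_lt_top
    have hyy : 2 * |y| < μ.toReal + ν.toReal := by
      have := (ENNReal.ofReal_lt_iff_lt_toReal (by positivity) (by simp [hμ', hν'])).mp hy
      rwa [ENNReal.toReal_add hμ' hν'] at this
    set a := μ.toReal with ha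
    set b := ν.toReal with hb
    have ha0 : 0 < a := ENNReal.toReal_pos hμ.ne' hμ'
    have hb0 : 0 < b := ENNReal.toReal_pos hν.ne' hν'
    have hab : 0 < a + b := by linarith
    have key : ∀ c : ℝ, 0 < c → c ≤ a + b → 2 * |y * (c / (a + b))| < c := by
      intro c hc hcab
      rw [abs_mul, abs_of_pos (show (0:ℝ) < c/(a+b) by positivity),
        show 2 * (|y| * (c/(a+b))) = (2*|y|)*c/(a+b) by ring, div_lt_iff₀ hab]
      nlinarith [mul_lt_mul_of_pos_right hyy hc]
    refine ⟨y * (a / (a + b)), ?_, y * (b / (a + b)), ?_, ?_⟩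
    · show ENNReal.ofReal (2 * |y * (a / (a + b))|) < μ
      rw [ENNReal.ofReal_lt_iff_lt_toReal (by positivity) hμ']
      exact key a ha0 (by linarith)
    · show ENNReal.ofReal (2 * |y * (b / (a + b))|) < ν
      rw [ENNReal.ofReal_lt_iff_lt_toReal (by positivity) hν']
      exact key b hb0 (by linarith)
    · field_simp

set_option maxHeartbeats 800000 in
/-- Slices of the sumset of Steiner symmetrizations: for every `x ∈ ℝ^{d-1}`,
`(A^⋆ + B^⋆)_x = ⋃ {(A^⋆)_{x'} + (B^⋆)_{x''} : x' + x'' = x, |A_{x'}| > 0, |B_{x''}| > 0}`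
and `|(A^⋆ + B^⋆)_x| = sup {|A_{x'}| + |B_{x''}| : x' + x'' = x, |A_{x'}| > 0, |B_{x''}| > 0}`
(empty union and supremum `0` when no such pair exists). -/
theorem steiner_sumset_slice
    (d : ℕ) (hd : 2 ≤ d) (A B : Set (Sp (d-1)))
    (hA : MeasurableSet A) (hB : MeasurableSet B)
    (hAfin : volume A < ⊤) (hBfin : volume B < ⊤) :
    ∀ x : Edim (d-1),
      (vslice (steiner A + steiner B) x =
        ⋃ (p : Edim (d-1) × Edim (d-1))
          (_ : p.1 + p.2 = x ∧ 0 < volume (vslice A p.1) ∧ 0 < volume (vslice B p.2)),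
            (vslice (steiner A) p.1 + vslice (steiner B) p.2)) ∧
      (volume (vslice (steiner A + steiner B) x) =
        ⨆ (p : Edim (d-1) × Edim (d-1))
          (_ : p.1 + p.2 = x ∧ 0 < volume (vslice A p.1) ∧ 0 < volume (vslice B p.2)),
            (volume (vslice A p.1) + volume (vslice B p.2))) := by
  intro x
  have hsl : ∀ (C : Set (Sp (d-1))) (x' : Edim (d-1)),
      vslice (steiner C) x' = Smu (volume (vslice C x')) := fun _ _ => rfl
  have key : vslice (steiner A + steiner B) x =
      ⋃ (p : Edim (d-1) × Edim (d-1))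
        (_ : p.1 + p.2 = x ∧ 0 < volume (vslice A p.1) ∧ 0 < volume (vslice B p.2)),
          (vslice (steiner A) p.1 + vslice (steiner B) p.2) := by
    ext y
    constructor
    · rintro ⟨⟨x1, y1⟩, h1, ⟨x2, y2⟩, h2, hadd⟩
      have hx : x1 + x2 = x := congrArg Prod.fst hadd
      have hy : y1 + y2 = y := congrArg Prod.snd hadd
      have p1 : (0:ℝ≥0∞) < volume (vslice A x1) := lt_of_le_of_lt zero_le h1
      have p2 : (0:ℝ≥0∞) < volume (vslice B x2) := lt_of_le_of_lt zero_le h2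
      exact Set.mem_iUnion₂.mpr ⟨(x1, x2), ⟨hx, p1, p2⟩, y1, h1, y2, h2, hy⟩
    · intro hy
      rcases Set.mem_iUnion₂.mp hy with ⟨p, ⟨hx, _, _⟩, y1, h1, y2, h2, hy'⟩
      exact ⟨(p.1, y1), h1, (p.2, y2), h2, by
        show (p.1, y1) + (p.2, y2) = (x, y)
        rw [Prod.mk_add_mk, hx]
        exact congrArg _ hy'⟩
  refine ⟨key, ?_⟩
  rw [key]
  apply le_antisymm
  · have hsub : (⋃ (p : Edim (d-1) × Edim (d-1))
        (_ : p.1 + p.2 = x ∧ 0 < volume (vslice A p.1) ∧ 0 < volume (vslice B p.2)),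
          (vslice (steiner A) p.1 + vslice (steiner B) p.2)) ⊆
        Smu (⨆ (p : Edim (d-1) × Edim (d-1))
          (_ : p.1 + p.2 = x ∧ 0 < volume (vslice A p.1) ∧ 0 < volume (vslice B p.2)),
            (volume (vslice A p.1) + volume (vslice B p.2))) := by
      refine Set.iUnion₂_subset fun p hp => ?_
      rw [hsl, hsl, Smu_add hp.2.1 hp.2.2]
      exact Smu_mono (le_iSup₂ (f := fun p _ => volume (vslice A p.1) + volume (vslice B p.2))
        p hp)
    exact (measure_mono hsub).trans_eq (vol_Smu _)
  · refine iSup₂_le fun p hp => ?_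
    refine le_trans (le_of_eq ?_) (measure_mono (Set.subset_iUnion₂ p hp))
    rw [hsl, hsl, Smu_add hp.2.1 hp.2.2, vol_Smu]
end
end

section
/- Let d ≥ 2 and let A ⊆ ℝ^d be a Lebesgue measurable set with finite, positive Lebesgue measure. Then for almost every λ > 0, |{x ∈ ℝ^{d−1} : |(A^♮)_x| > λ}| = |{x ∈ ℝ^{d−1} : |A_x| > λ}|, where both measures are (d−1)-dimensional Lebesgue measure. -/
open MeasureTheory Set Pointwise Filter ENNReal

noncomputable section

lemma ball_superlevel {n : ℕ} (hn : 1 ≤ n) (V : ℝ≥0∞) (hV : V ≠ ⊤) :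
    volume {x : Edim n | volume (Metric.ball (0 : Edim n) ‖x‖) < V} = V := by
  haveI : Nontrivial (Edim n) := by
    refine nontrivial_of_ne (EuclideanSpace.single (⟨0, by omega⟩ : Fin n) (1 : ℝ)) 0 ?_
    intro h
    have := congrFun (congrArg (fun v : Edim n => (v : Fin n → ℝ)) h) ⟨0, by omega⟩
    simp [EuclideanSpace.single] at this
  set ω := volume (Metric.ball (0 : Edim n) 1) with hωdef
  have hω0 : ω ≠ 0 := (Metric.measure_ball_pos _ _ one_pos).ne'
  have hωt : ω ≠ ⊤ := measure_ball_lt_top.ne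
  have hdim : Module.finrank ℝ (Edim n) = n := finrank_euclideanSpace_fin
  have hball : ∀ r : ℝ, 0 ≤ r →
      volume (Metric.ball (0 : Edim n) r) = ENNReal.ofReal (r ^ n) * ω := by
    intro r hr
    rw [Measure.addHaar_ball volume 0 hr, hdim]
  set r : ℝ := (V.toReal / ω.toReal) ^ ((n : ℝ)⁻¹) with hrdef
  have hx0 : (0:ℝ) ≤ V.toReal / ω.toReal :=
    div_nonneg ENNReal.toReal_nonneg ENNReal.toReal_nonneg
  have hr0 : 0 ≤ r := Real.rpow_nonneg hx0 _
  have hnz : (n : ℝ) ≠ 0 := by positivity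
  have hrn : r ^ n = V.toReal / ω.toReal := by
    rw [hrdef, ← Real.rpow_natCast _ n, ← Real.rpow_mul hx0, inv_mul_cancel₀ hnz,
      Real.rpow_one]
  have hVr : ENNReal.ofReal (r ^ n) * ω = V := by
    rw [hrn]
    have h1 : ENNReal.ofReal (V.toReal / ω.toReal) = V / ω := by
      rw [← ENNReal.toReal_div, ENNReal.ofReal_toReal]
      exact (ENNReal.div_lt_top hV hω0).ne
    rw [h1, ENNReal.div_mul_cancel hω0 hωt]
  have hset : {x : Edim n | volume (Metric.ball (0 : Edim n) ‖x‖) < V} = Metric.ball 0 r := by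
    ext x
    simp only [mem_setOf_eq, Metric.mem_ball, dist_zero_right]
    rw [hball ‖x‖ (norm_nonneg x), ← hVr, (ENNReal.mul_left_strictMono hω0 hωt).lt_iff_lt,
      ENNReal.ofReal_lt_ofReal_iff_of_nonneg (pow_nonneg (norm_nonneg x) n)]
    exact pow_lt_pow_iff_left₀ (norm_nonneg x) hr0 (by omega)
  rw [hset, hball r hr0, hVr]

/-- For a measurable set `A ⊆ ℝ^d` (`d ≥ 2`) of finite positive measure, for almost every
`λ > 0` the superlevel sets `{x : |(A^♮)_x| > λ}` and `{x : |A_x| > λ}` have equal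
`(d-1)`-dimensional Lebesgue measure. -/
theorem natSymm_superlevel_measure_eq
    (d : ℕ) (hd : 2 ≤ d) (A : Set (Sp (d-1)))
    (hA : MeasurableSet A) (hpos : 0 < volume A) (hfin : volume A < ⊤) :
    ∀ᵐ lam ∂(volume.restrict (Set.Ioi (0:ℝ))),
      volume {x : Edim (d-1) | ENNReal.ofReal lam < volume (vslice (natSymm A) x)} =
      volume {x : Edim (d-1) | ENNReal.ofReal lam < volume (vslice A x)} := by
  have hn : 1 ≤ d - 1 := by omega
  set f : Edim (d-1) → ℝ≥0∞ := fun x => volume (vslice A x) with hfdef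
  have hf : Measurable f := by
    have : f = fun x => volume (Prod.mk x ⁻¹' A) := rfl
    rw [this]
    exact measurable_measure_prodMk_left hA
  set μ : ℝ → ℝ≥0∞ := fun s => volume {x | ENNReal.ofReal s < f x} with hμdef
  have anti : Antitone μ := by
    intro a b hab
    exact measure_mono fun x hx =>
      lt_of_le_of_lt (ENNReal.ofReal_le_ofReal hab) hx
  -- Markov inequality: superlevel sets have finite measure for positive level
  have hint : ∫⁻ x, f x = volume A := by
    rw [hfdef]
    have : (volume : Measure (Sp (d-1))) = (volume : Measure (Edim (d-1))).prod volume :=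
      rfl
    rw [show (fun x => volume (vslice A x)) = fun x => volume (Prod.mk x ⁻¹' A) from rfl,
      ← Measure.prod_apply hA, ← this]
  have hμfin : ∀ s : ℝ, 0 < s → μ s ≠ ⊤ := by
    intro s hs
    have h1 : μ s ≤ (∫⁻ x, f x) / ENNReal.ofReal s := by
      have hsub : {x | ENNReal.ofReal s < f x} ⊆ {x | ENNReal.ofReal s ≤ f x} :=
        fun x hx => by
          simp only [mem_setOf_eq] at hx ⊢; exact le_of_lt hx
      refine le_trans (measure_mono hsub) ?_
      exact meas_ge_le_lintegral_div hf.aemeasurable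
        (by simpa using hs) ENNReal.ofReal_ne_top
    refine ne_top_of_le_ne_top ?_ h1
    rw [hint]
    exact (ENNReal.div_lt_top hfin.ne (by simpa using hs)).ne
  set L : ℝ → ℝ≥0∞ := fun lam => ⨆ l : Set.Ioi lam, μ l with hLdef
  have hL_le : ∀ lam, L lam ≤ μ lam := by
    intro lam
    exact iSup_le fun l => anti (le_of_lt l.2)
  -- the key set identity
  have key : ∀ lam : ℝ, 0 < lam →
      {x : Edim (d-1) | ENNReal.ofReal lam < volume (vslice (natSymm A) x)} =
      {x : Edim (d-1) | volume (Metric.ball (0 : Edim (d-1)) ‖x‖) < L lam} := by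
    intro lam hlam
    ext x
    set c := volume (Metric.ball (0 : Edim (d-1)) ‖x‖) with hcdef
    have hvs : vslice (natSymm A) x = {t : ℝ | c < μ (2 * |t|)} := rfl
    simp only [mem_setOf_eq, hvs]
    constructor
    · intro h
      rw [hLdef, lt_iSup_iff]
      by_contra hcon
      push_neg at hcon
      have hsub : {t : ℝ | c < μ (2 * |t|)} ⊆ Set.Icc (-(lam/2)) (lam/2) := by
        intro t ht
        simp only [mem_setOf_eq] at ht
        by_contra htc
        have h2 : lam < 2 * |t| := by
          simp only [Set.mem_Icc, not_and_or, not_le] at htc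
          rcases htc with h' | h' <;> [skip; skip] <;> cases abs_cases t <;> linarith
        exact absurd ht (not_lt.2 (hcon ⟨2 * |t|, h2⟩))
      have hmeas : volume {t : ℝ | c < μ (2 * |t|)} ≤ volume (Set.Icc (-(lam/2)) (lam/2)) :=
        measure_mono hsub
      rw [Real.volume_Icc] at hmeas
      have : volume {t : ℝ | c < μ (2 * |t|)} ≤ ENNReal.ofReal lam := by
        refine le_trans hmeas (le_of_eq ?_)
        congr 1; ring
      exact absurd h (not_lt.2 this)
    · intro h
      rw [hLdef, lt_iSup_iff] at h
      obtain ⟨⟨l, hl⟩, hcl⟩ := h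
      have hl0 : 0 < l := lt_trans hlam hl
      have hsub : Set.Icc (-(l/2)) (l/2) ⊆ {t : ℝ | c < μ (2 * |t|)} := by
        intro t ht
        simp only [Set.mem_Icc] at ht
        have habs : 2 * |t| ≤ l := by
          have h2 : |t| ≤ l / 2 := abs_le.2 ht
          linarith
        exact lt_of_lt_of_le hcl (anti habs)
      calc ENNReal.ofReal lam < ENNReal.ofReal l := by
            exact (ENNReal.ofReal_lt_ofReal_iff hl0).2 hl
        _ = volume (Set.Icc (-(l/2)) (l/2)) := by
            rw [Real.volume_Icc]; congr 1; ring
        _ ≤ volume {t : ℝ | c < μ (2 * |t|)} := measure_mono hsub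
  -- a.e. continuity of μ
  have hcont : ∀ᵐ lam : ℝ, ContinuousAt μ lam := by
    have hc := anti.countable_not_continuousAt
    have h0 : volume {x : ℝ | ¬ContinuousAt μ x} = 0 := hc.measure_zero _
    rw [ae_iff]
    simpa using h0
  filter_upwards [ae_restrict_mem measurableSet_Ioi, ae_restrict_of_ae hcont]
    with lam hlam hc
  have hlam0 : 0 < lam := hlam
  -- L lam = μ lam at continuity points
  have hLμ : L lam = μ lam := by
    refine le_antisymm (hL_le lam) ?_
    have ht : Tendsto μ (nhdsWithin lam (Set.Ioi lam)) (nhds (μ lam)) :=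
      (hc.continuousWithinAt : ContinuousWithinAt μ (Set.Ioi lam) lam)
    refine le_of_tendsto ht ?_
    filter_upwards [self_mem_nhdsWithin] with l hl
    exact le_iSup (fun l : Set.Ioi lam => μ l) ⟨l, hl⟩
  rw [key lam hlam0, ball_superlevel hn _ (by rw [hLμ]; exact hμfin lam hlam0), hLμ]
end
end

section
/- Let d ≥ 2 and let π : ℝ^d → ℝ^{d−1} be the projection π(x', x_d) = x'. If A ⊆ ℝ^d is a nonempty open set of finite Lebesgue measure, then |π(A)| = |π(A^♮)|, where |·| denotes (d−1)-dimensional Lebesgue (outer) measure. -/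
open MeasureTheory Set Pointwise Filter ENNReal

noncomputable section

lemma vol_sublevel (n : ℕ) (hn : 1 ≤ n) (v : ℝ≥0∞) :
    volume {x : Edim n | volume (Metric.ball (0 : Edim n) ‖x‖) < v} = v := by
  haveI : Nonempty (Fin n) := ⟨⟨0, hn⟩⟩
  haveI : Nontrivial (Edim n) := inferInstance
  set c : ℝ≥0∞ := volume (Metric.ball (0 : Edim n) 1) with hc
  have hc0 : c ≠ 0 := (Metric.measure_ball_pos volume 0 one_pos).ne'
  have hct : c ≠ ⊤ := measure_ball_lt_top.ne
  have hball : ∀ r : ℝ, 0 ≤ r →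
      volume (Metric.ball (0 : Edim n) r) = ENNReal.ofReal (r ^ n) * c := by
    intro r hr
    rw [Measure.addHaar_ball _ _ hr, finrank_euclideanSpace_fin]
  rcases eq_or_ne v 0 with rfl | hv0
  · convert measure_empty (μ := volume)
    ext x; simp [not_lt_of_ge zero_le]
  rcases eq_or_ne v ⊤ with rfl | hvt
  · have : {x : Edim n | volume (Metric.ball (0 : Edim n) ‖x‖) < ⊤} = univ := by
      ext x; simp [measure_ball_lt_top]
    rw [this]
    exact measure_univ_of_isAddLeftInvariant volume
  -- main case
  set r : ℝ := ((v / c).toReal) ^ ((1 : ℝ) / n) with hrdef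
  have hvc0 : (0:ℝ) ≤ (v / c).toReal := ENNReal.toReal_nonneg
  have hr0 : 0 ≤ r := Real.rpow_nonneg hvc0 _
  have hn' : (n : ℝ) ≠ 0 := Nat.cast_ne_zero.mpr (by omega)
  have hrn : r ^ n = (v / c).toReal := by
    rw [hrdef, ← Real.rpow_natCast (((v / c).toReal) ^ ((1:ℝ)/n)) n,
      ← Real.rpow_mul hvc0, one_div_mul_cancel hn', Real.rpow_one]
  have hdivt : v / c ≠ ⊤ := (ENNReal.div_lt_top hvt hc0).ne
  have hvr : v = ENNReal.ofReal (r ^ n) * c := by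
    rw [hrn, ENNReal.ofReal_toReal hdivt, ENNReal.div_mul_cancel hc0 hct]
  have hset : {x : Edim n | volume (Metric.ball (0 : Edim n) ‖x‖) < v}
      = Metric.ball (0 : Edim n) r := by
    ext x
    rw [mem_setOf_eq, hball _ (norm_nonneg x), hvr,
      (ENNReal.mul_left_strictMono hc0 hct).lt_iff_lt,
      ENNReal.ofReal_lt_ofReal_iff_of_nonneg (pow_nonneg (norm_nonneg x) n),
      pow_lt_pow_iff_left₀ (norm_nonneg x) hr0 (by omega),
      Metric.mem_ball, dist_zero_right]
  rw [hset, hball r hr0, ← hvr]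


/-- If `A ⊆ ℝ^d` (`d ≥ 2`) is a nonempty open set of finite measure then
`|π(A)| = |π(A^♮)|`, where `π : ℝ^{d-1} × ℝ → ℝ^{d-1}` is the projection. -/
theorem projection_natSymm_measure_eq
    (d : ℕ) (hd : 2 ≤ d) (A : Set (Sp (d-1)))
    (hne : A.Nonempty) (hopen : IsOpen A) (hfin : volume A < ⊤) :
    volume (Prod.fst '' A) = volume (Prod.fst '' natSymm A) := by
  have hn1 : 1 ≤ d - 1 := by omega
  have hproj : Prod.fst '' A = {x : Edim (d-1) | 0 < volume (vslice A x)} := by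
    ext x
    constructor
    · rintro ⟨p, hp, rfl⟩
      have heq : vslice A p.1 = (fun y => (p.1, y)) ⁻¹' A := rfl
      have hopen' : IsOpen (vslice A p.1) := by
        rw [heq]; exact hopen.preimage (Continuous.prodMk_right p.1)
      exact hopen'.measure_pos volume ⟨p.2, hp⟩
    · intro hx
      obtain ⟨y, hy⟩ := nonempty_of_measure_ne_zero hx.ne'
      exact ⟨(x, y), hy, rfl⟩
  set v := volume (Prod.fst '' A) with hv
  have hslice0 : hslice (steiner A) 0 = Prod.fst '' A := by
    ext z
    simp only [hslice, steiner, vslice, mem_setOf_eq, abs_zero, mul_zero,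
      ENNReal.ofReal_zero, hproj]
  have hsub : ∀ t : ℝ, hslice (steiner A) t ⊆ Prod.fst '' A := by
    intro t z hz
    simp only [hslice, steiner, mem_setOf_eq] at hz
    rw [hproj]
    exact lt_of_le_of_lt zero_le hz
  have hT : Prod.fst '' natSymm A
      = {x : Edim (d-1) | volume (Metric.ball (0 : Edim (d-1)) ‖x‖) < v} := by
    ext x
    constructor
    · rintro ⟨p, hp, rfl⟩
      exact lt_of_lt_of_le hp (measure_mono (hsub p.2))
    · intro hx
      refine ⟨(x, 0), ?_, rfl⟩
      show volume (Metric.ball (0 : Edim (d-1)) ‖x‖) < volume (hslice (steiner A) 0)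
      rwa [hslice0]
  rw [hT, vol_sublevel (d-1) hn1 v]
end
end

section
/- Let d ≥ 2. For any nonempty Borel sets A, B ⊆ ℝ^d and any t ∈ (0,1), (sup_{x ∈ ℝ^{d−1}} |A_x|) · |π(B)| ≤ t^{−1}(1−t)^{−(d−1)} |tA + (1−t)B|, where |π(B)| denotes the (d−1)-dimensional Lebesgue measure of the projection π(B) (which is Lebesgue measurable as an analytic set), and |tA + (1−t)B| denotes outer Lebesgue measure. -/
open MeasureTheory Set Pointwise Filter ENNReal

noncomputable section

/-- For nonempty Borel sets `A, B ⊆ ℝ^d` (`d ≥ 2`) and `t ∈ (0,1)`,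
`(sup_x |A_x|) · |π(B)| ≤ t⁻¹ (1-t)^{-(d-1)} |tA + (1-t)B|`. -/
theorem slice_sup_mul_projection_le
    (d : ℕ) (hd : 2 ≤ d) (A B : Set (Sp (d-1)))
    (hA : MeasurableSet A) (hB : MeasurableSet B)
    (hAne : A.Nonempty) (hBne : B.Nonempty)
    (t : ℝ) (ht : t ∈ Set.Ioo (0:ℝ) 1) :
    (⨆ x : Edim (d-1), volume (vslice A x)) * volume (Prod.fst '' B)
      ≤ ENNReal.ofReal (t⁻¹ * ((1 - t) ^ (d-1))⁻¹) * volume (t • A + (1-t) • B) := by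
  obtain ⟨ht0, ht1⟩ := ht
  have ht1' : (0:ℝ) < 1 - t := by linarith
  set k : ℝ := (1 - t) ^ (d-1) with hk_def
  have hk : 0 < k := pow_pos ht1' _
  set S : Set (Sp (d-1)) := t • A + (1-t) • B with hSdef
  set G := toMeasurable volume S with hGdef
  have hSG : S ⊆ G := subset_toMeasurable _ _
  have hGmeas : MeasurableSet G := measurableSet_toMeasurable _ _
  have hGvol : volume G = volume S := measure_toMeasurable _
  rw [ENNReal.iSup_mul]
  refine iSup_le fun x₀ => ?_
  set a := volume (vslice A x₀) with ha_def
  set b := volume (Prod.fst '' B) with hb_def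
  set s : Set (Edim (d-1)) := (t • x₀) +ᵥ (1-t) • (Prod.fst '' B) with hsdef
  have hs_vol : volume s = ENNReal.ofReal k * b := by
    rw [hsdef, measure_vadd, Measure.addHaar_smul_of_nonneg volume ht1'.le,
      finrank_euclideanSpace_fin]
  have hslice : ∀ x' ∈ s, ENNReal.ofReal t * a ≤ volume (Prod.mk x' ⁻¹' G) := by
    rintro x' hx'
    rw [hsdef] at hx'
    obtain ⟨x1, hx1, rfl⟩ := hx'
    obtain ⟨x2, hx2, rfl⟩ := hx1
    obtain ⟨⟨xb, yb⟩, hbB, rfl⟩ := hx2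
    have hsub : ((1-t) * yb) +ᵥ (t • vslice A x₀) ⊆
        Prod.mk (t • x₀ +ᵥ ((1-t) • (xb, yb).1)) ⁻¹' G := by
      rintro y hy
      obtain ⟨y1, hy1, rfl⟩ := hy
      obtain ⟨ya, hya, rfl⟩ := hy1
      apply hSG
      rw [hSdef]
      have hmem : t • ((x₀, ya) : Sp (d-1)) + (1-t) • (xb, yb) ∈ t • A + (1-t) • B :=
        Set.add_mem_add (smul_mem_smul_set hya) (smul_mem_smul_set hbB)
      convert hmem using 1
      simp only [Prod.smul_mk, Prod.mk_add_mk, smul_eq_mul, vadd_eq_add]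
      exact Prod.ext rfl (add_comm _ _)
    calc ENNReal.ofReal t * a = volume (((1-t) * yb) +ᵥ (t • vslice A x₀)) := by
          rw [measure_vadd, Measure.addHaar_smul_of_nonneg volume ht0.le]
          simp
          rfl
      _ ≤ _ := measure_mono hsub
  have hf : Measurable fun x => volume (Prod.mk x ⁻¹' G) :=
    measurable_measure_prodMk_left hGmeas
  have key : (ENNReal.ofReal t * a) * volume s ≤ volume S := by
    calc (ENNReal.ofReal t * a) * volume s
        ≤ (ENNReal.ofReal t * a) * volume {x | ENNReal.ofReal t * a ≤ volume (Prod.mk x ⁻¹' G)} :=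
          mul_le_mul_right (measure_mono hslice) _
      _ ≤ ∫⁻ x, volume (Prod.mk x ⁻¹' G) := mul_meas_ge_le_lintegral₀ hf.aemeasurable _
      _ = volume G := by rw [MeasureTheory.Measure.volume_eq_prod, Measure.prod_apply hGmeas]
      _ = volume S := hGvol
  rw [hs_vol] at key
  have hfin : ENNReal.ofReal (t⁻¹ * k⁻¹) * (ENNReal.ofReal t * a * (ENNReal.ofReal k * b))
      = a * b := by
    have h2 : ENNReal.ofReal (t⁻¹ * k⁻¹) * (ENNReal.ofReal t * a * (ENNReal.ofReal k * b))
        = (ENNReal.ofReal (t⁻¹ * k⁻¹) * ENNReal.ofReal t * ENNReal.ofReal k) * (a * b) := by ring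
    rw [h2, ← ENNReal.ofReal_mul (by positivity), ← ENNReal.ofReal_mul (by positivity),
      show t⁻¹ * k⁻¹ * t * k = 1 by field_simp, ENNReal.ofReal_one, one_mul]
  calc a * b = ENNReal.ofReal (t⁻¹ * k⁻¹) * (ENNReal.ofReal t * a * (ENNReal.ofReal k * b)) :=
        hfin.symm
    _ ≤ ENNReal.ofReal (t⁻¹ * k⁻¹) * volume S := by
        rw [mul_assoc (ENNReal.ofReal t)] at key ⊢ <;> exact mul_le_mul_right key _
end
end

section
/- Let d ≥ 2 and τ ∈ (0, 1/2]. There exists γ ∈ (0,1], depending only on d and τ, with the following property: for every t ∈ [τ, 1−τ] and all nonempty Borel sets A, B ⊆ ℝ^d with |A| ≥ 1/2, |B| ≥ 1/2, and |tA + (1−t)B| ≤ 2, one has γ ≤ (sup_{x ∈ ℝ^{d−1}} |A_x|)/(sup_{y ∈ ℝ^{d−1}} |B_y|) ≤ γ^{−1} and γ ≤ |π(A)|/|π(B)| ≤ γ^{−1}. -/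
open MeasureTheory Set Pointwise Filter ENNReal

noncomputable section

lemma sliceFubini {n : ℕ} (A : Set (Sp n)) (hA : MeasurableSet A) :
    volume A = ∫⁻ x, volume (vslice A x) := by
  rw [show (volume : Measure (Sp n)) = (volume : Measure (Edim n)).prod volume from rfl]
  exact Measure.prod_apply hA

lemma vol_le_sup_mul_proj {n : ℕ} (A : Set (Sp n)) (hA : MeasurableSet A) :
    volume A ≤ (⨆ x, volume (vslice A x)) * volume (Prod.fst '' A) := by
  obtain ⟨H, hsub, hH, hHm⟩ := exists_measurable_superset volume (Prod.fst '' A)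
  rw [sliceFubini A hA]
  calc ∫⁻ x, volume (vslice A x)
      ≤ ∫⁻ x, H.indicator (fun _ => ⨆ x, volume (vslice A x)) x := by
        refine lintegral_mono fun z => ?_
        by_cases hz : z ∈ H
        · simpa [hz] using le_iSup (fun x => volume (vslice A x)) z
        · have : vslice A z = ∅ := by
            ext a; simp only [vslice, mem_setOf_eq, mem_empty_iff_false, iff_false]
            intro ha; exact hz (hsub ⟨(z, a), ha, rfl⟩)
          simp [hz, this]
    _ = (⨆ x, volume (vslice A x)) * volume H := by rw [lintegral_indicator_const hH]
    _ = _ := by rw [hHm]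

lemma key {n : ℕ} (A B : Set (Sp n)) (t s : ℝ) (ht : 0 < t) (hs : 0 < s) (x : Edim n) :
    ENNReal.ofReal (t * s ^ n) * (volume (vslice A x) * volume (Prod.fst '' B))
      ≤ volume (t • A + s • B) := by
  set C := t • A + s • B with hC
  obtain ⟨H, hCH, hH, hHm⟩ := exists_measurable_superset volume C
  set f : Edim n → ℝ≥0∞ := fun z => volume (Prod.mk z ⁻¹' H) with hf
  have hfmeas : Measurable f := measurable_measure_prodMk_left hH
  have hint : ∫⁻ z, f z = volume C := by
    rw [← hHm]
    rw [show (volume : Measure (Sp n)) = (volume : Measure (Edim n)).prod volume from rfl]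
    exact (Measure.prod_apply hH).symm
  set κ : ℝ≥0∞ := ENNReal.ofReal t * volume (vslice A x) with hκ
  have hpt : ∀ y ∈ Prod.fst '' B, κ ≤ f (t • x + s • y) := by
    rintro y ⟨⟨y', b⟩, hyB, rfl⟩
    simp only at hyB ⊢
    have hsub : ((s * b) +ᵥ (t • vslice A x)) ⊆ Prod.mk (t • x + s • y') ⁻¹' H := by
      rintro u ⟨v, ⟨a, ha, rfl⟩, rfl⟩
      apply hCH
      refine ⟨t • (x, a), smul_mem_smul_set ha, s • (y', b), smul_mem_smul_set hyB, ?_⟩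
      apply Prod.ext
      · rfl
      · show t * a + s * b = s * b +ᵥ t • a
        simp [smul_eq_mul]; ring
    have h1 : volume ((s * b) +ᵥ (t • vslice A x)) = κ := by
      rw [measure_vadd, Measure.addHaar_smul_of_nonneg volume ht.le, hκ]
      simp
    calc κ = volume ((s * b) +ᵥ (t • vslice A x)) := h1.symm
    _ ≤ f (t • x + s • y') := measure_mono hsub
  have hT : ((t • x) +ᵥ (s • (Prod.fst '' B))) ⊆ {z | κ ≤ f z} := by
    rintro u ⟨v, ⟨y, hy, rfl⟩, rfl⟩
    exact hpt y hy
  have hTm : volume ((t • x) +ᵥ (s • (Prod.fst '' B)))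
      = ENNReal.ofReal (s ^ n) * volume (Prod.fst '' B) := by
    rw [measure_vadd, Measure.addHaar_smul_of_nonneg volume hs.le]
    congr 2
    simp [finrank_euclideanSpace_fin]
  calc ENNReal.ofReal (t * s ^ n) * (volume (vslice A x) * volume (Prod.fst '' B))
      = κ * (ENNReal.ofReal (s ^ n) * volume (Prod.fst '' B)) := by
        rw [ENNReal.ofReal_mul ht.le, hκ]; ring
    _ = κ * volume ((t • x) +ᵥ (s • (Prod.fst '' B))) := by rw [hTm]
    _ ≤ κ * volume {z | κ ≤ f z} := mul_le_mul_right (measure_mono hT) κ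
    _ ≤ ∫⁻ z, f z := mul_meas_ge_le_lintegral₀ hfmeas.aemeasurable κ
    _ = volume C := hint


/-- There is `γ ∈ (0,1]`, depending only on `d` and `τ`, such that for all `t ∈ [τ, 1-τ]`
and nonempty Borel sets `A, B ⊆ ℝ^d` with `|A|, |B| ≥ 1/2` and `|tA + (1-t)B| ≤ 2`,
both `(sup_x |A_x|)/(sup_y |B_y|)` and `|π(A)|/|π(B)|` lie in `[γ, γ⁻¹]`. -/
theorem slice_sup_and_projection_ratio_bounds
    (d : ℕ) (hd : 2 ≤ d) (τ : ℝ) (hτ : τ ∈ Set.Ioc (0:ℝ) (1/2)) :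
    ∃ γ : ℝ, 0 < γ ∧ γ ≤ 1 ∧
      ∀ t ∈ Set.Icc τ (1 - τ), ∀ A B : Set (Sp (d-1)),
        MeasurableSet A → MeasurableSet B → A.Nonempty → B.Nonempty →
        ENNReal.ofReal (1/2) ≤ volume A → ENNReal.ofReal (1/2) ≤ volume B →
        volume (t • A + (1-t) • B) ≤ 2 →
        (ENNReal.ofReal γ
            ≤ (⨆ x : Edim (d-1), volume (vslice A x)) / (⨆ y : Edim (d-1), volume (vslice B y)) ∧
          (⨆ x : Edim (d-1), volume (vslice A x)) / (⨆ y : Edim (d-1), volume (vslice B y))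
            ≤ ENNReal.ofReal γ⁻¹) ∧
        (ENNReal.ofReal γ ≤ volume (Prod.fst '' A) / volume (Prod.fst '' B) ∧
          volume (Prod.fst '' A) / volume (Prod.fst '' B) ≤ ENNReal.ofReal γ⁻¹) := by
  obtain ⟨hτ0, hτ2⟩ := hτ
  have hγd : 0 < τ ^ d := pow_pos hτ0 d
  refine ⟨τ ^ d / 4, by positivity, ?_, ?_⟩
  · have : τ ^ d ≤ 1 := pow_le_one₀ hτ0.le (by linarith)
    linarith
  intro t ht A B hA hB hAne hBne hvA hvB hvC
  have hd1 : (d - 1) + 1 = d := by omega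
  have ht0 : 0 < t := lt_of_lt_of_le hτ0 ht.1
  have hs0 : 0 < 1 - t := by have := ht.2; linarith
  have hτt : τ ≤ t := ht.1
  have hτs : τ ≤ 1 - t := by linarith [ht.2]
  set α := ⨆ x : Edim (d-1), volume (vslice A x) with hα
  set β := ⨆ y : Edim (d-1), volume (vslice B y) with hβ
  set P := volume (Prod.fst '' A) with hP
  set Q := volume (Prod.fst '' B) with hQ
  have h1 : ENNReal.ofReal (1/2) ≤ α * P := le_trans hvA (vol_le_sup_mul_proj A hA)
  have h2 : ENNReal.ofReal (1/2) ≤ β * Q := le_trans hvB (vol_le_sup_mul_proj B hB)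
  have hcoef1 : ENNReal.ofReal (τ ^ d) ≤ ENNReal.ofReal (t * (1-t) ^ (d-1)) := by
    apply ENNReal.ofReal_le_ofReal
    calc τ ^ d = τ * τ ^ (d-1) := by conv_lhs => rw [← hd1, pow_succ, mul_comm]
    _ ≤ t * (1-t) ^ (d-1) :=
        mul_le_mul hτt (pow_le_pow_left₀ hτ0.le hτs _) (by positivity) ht0.le
  have hcoef2 : ENNReal.ofReal (τ ^ d) ≤ ENNReal.ofReal ((1-t) * t ^ (d-1)) := by
    apply ENNReal.ofReal_le_ofReal
    calc τ ^ d = τ * τ ^ (d-1) := by conv_lhs => rw [← hd1, pow_succ, mul_comm]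
    _ ≤ (1-t) * t ^ (d-1) :=
        mul_le_mul hτs (pow_le_pow_left₀ hτ0.le hτt _) (by positivity) hs0.le
  have h3 : ENNReal.ofReal (τ ^ d) * (α * Q) ≤ 2 := by
    have hx : ∀ x : Edim (d-1),
        ENNReal.ofReal (τ ^ d) * (volume (vslice A x) * Q) ≤ 2 := fun x => by
      have hk := key A B t (1-t) ht0 hs0 x
      exact le_trans (mul_le_mul' hcoef1 le_rfl) (le_trans hk hvC)
    have hrw : α * Q = ⨆ x : Edim (d-1), volume (vslice A x) * Q := iSup_mul _ _
    rw [hrw, ENNReal.mul_iSup]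
    exact iSup_le hx
  have h4 : ENNReal.ofReal (τ ^ d) * (β * P) ≤ 2 := by
    have hvC' : volume ((1-t) • B + t • A) ≤ 2 := by rwa [add_comm]
    have hx : ∀ y : Edim (d-1),
        ENNReal.ofReal (τ ^ d) * (volume (vslice B y) * P) ≤ 2 := fun y => by
      have hk := key B A (1-t) t hs0 ht0 y
      exact le_trans (mul_le_mul' hcoef2 le_rfl) (le_trans hk hvC')
    have hrw : β * P = ⨆ y : Edim (d-1), volume (vslice B y) * P := iSup_mul _ _
    rw [hrw, ENNReal.mul_iSup]
    exact iSup_le hx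
  -- nonvanishing and finiteness
  have hhalf : (0:ℝ≥0∞) < ENNReal.ofReal (1/2) := by norm_num
  have hα0 : α ≠ 0 := by intro h; rw [h, zero_mul] at h1; exact absurd (lt_of_lt_of_le hhalf h1) (by simp)
  have hP0 : P ≠ 0 := by intro h; rw [h, mul_zero] at h1; exact absurd (lt_of_lt_of_le hhalf h1) (by simp)
  have hβ0 : β ≠ 0 := by intro h; rw [h, zero_mul] at h2; exact absurd (lt_of_lt_of_le hhalf h2) (by simp)
  have hQ0 : Q ≠ 0 := by intro h; rw [h, mul_zero] at h2; exact absurd (lt_of_lt_of_le hhalf h2) (by simp)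
  have hcτ : (ENNReal.ofReal (τ ^ d)) ≠ 0 := by
    simp only [ne_eq, ENNReal.ofReal_eq_zero, not_le]; exact hγd
  have hαQ : α * Q ≠ ⊤ := by
    intro h; rw [h, ENNReal.mul_top hcτ] at h3; exact absurd h3 (by simp)
  have hβP : β * P ≠ ⊤ := by
    intro h; rw [h, ENNReal.mul_top hcτ] at h4; exact absurd h4 (by simp)
  have hαt : α ≠ ⊤ := by intro h; exact hαQ (by rw [h]; exact ENNReal.top_mul hQ0)
  have hQt : Q ≠ ⊤ := by intro h; exact hαQ (by rw [h]; exact ENNReal.mul_top hα0)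
  have hβt : β ≠ ⊤ := by intro h; exact hβP (by rw [h]; exact ENNReal.top_mul hP0)
  have hPt : P ≠ ⊤ := by intro h; exact hβP (by rw [h]; exact ENNReal.mul_top hβ0)
  set a := α.toReal with ha
  set b := β.toReal with hb
  set p := P.toReal with hp
  set q := Q.toReal with hq
  have ha0 : 0 < a := ENNReal.toReal_pos hα0 hαt
  have hb0 : 0 < b := ENNReal.toReal_pos hβ0 hβt
  have hp0 : 0 < p := ENNReal.toReal_pos hP0 hPt
  have hq0 : 0 < q := ENNReal.toReal_pos hQ0 hQt
  have r1 : 1/2 ≤ a * p := by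
    have := ENNReal.toReal_mono (ENNReal.mul_ne_top hαt hPt) h1
    rwa [ENNReal.toReal_ofReal (by norm_num), ENNReal.toReal_mul] at this
  have r2 : 1/2 ≤ b * q := by
    have := ENNReal.toReal_mono (ENNReal.mul_ne_top hβt hQt) h2
    rwa [ENNReal.toReal_ofReal (by norm_num), ENNReal.toReal_mul] at this
  have r3 : τ ^ d * (a * q) ≤ 2 := by
    have := ENNReal.toReal_mono (by simp) h3
    rwa [ENNReal.toReal_mul, ENNReal.toReal_mul, ENNReal.toReal_ofReal hγd.le,
      ENNReal.toReal_ofNat] at this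
  have r4 : τ ^ d * (b * p) ≤ 2 := by
    have := ENNReal.toReal_mono (by simp) h4
    rwa [ENNReal.toReal_mul, ENNReal.toReal_mul, ENNReal.toReal_ofReal hγd.le,
      ENNReal.toReal_ofNat] at this
  have hαr : α = ENNReal.ofReal a := (ENNReal.ofReal_toReal hαt).symm
  have hβr : β = ENNReal.ofReal b := (ENNReal.ofReal_toReal hβt).symm
  have hPr : P = ENNReal.ofReal p := (ENNReal.ofReal_toReal hPt).symm
  have hQr : Q = ENNReal.ofReal q := (ENNReal.ofReal_toReal hQt).symm
  have hinv : (τ ^ d / 4)⁻¹ = 4 / τ ^ d := by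
    rw [inv_div]
  refine ⟨⟨?_, ?_⟩, ?_, ?_⟩
  · rw [hαr, hβr, ← ENNReal.ofReal_div_of_pos hb0]
    apply ENNReal.ofReal_le_ofReal
    rw [le_div_iff₀ hb0]
    have key : (τ ^ d / 4 * b) * p ≤ a * p := by nlinarith
    exact le_of_mul_le_mul_right key hp0
  · rw [hαr, hβr, ← ENNReal.ofReal_div_of_pos hb0, hinv]
    apply ENNReal.ofReal_le_ofReal
    rw [div_le_div_iff₀ hb0 hγd]
    nlinarith
  · rw [hPr, hQr, ← ENNReal.ofReal_div_of_pos hq0]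
    apply ENNReal.ofReal_le_ofReal
    rw [le_div_iff₀ hq0]
    have key : (τ ^ d / 4 * q) * a ≤ p * a := by nlinarith
    exact le_of_mul_le_mul_right key ha0
  · rw [hPr, hQr, ← ENNReal.ofReal_div_of_pos hq0, hinv]
    apply ENNReal.ofReal_le_ofReal
    rw [div_le_div_iff₀ hq0 hγd]
    nlinarith
end
end

section
/- Let d ≥ 2 and let A ⊆ ℝ^d be a Borel set with |π(A)| < ∞. Then for any r, t ∈ (0,∞), the one-dimensional Lebesgue measure of the set {s > 0 : |𝒜(s)| − |𝒜(s+t)| > r} is at most t·r^{−1}·|π(A)|. -/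
open MeasureTheory Set Pointwise Filter ENNReal

noncomputable section

/-- The superlevel set `𝒜(s) = {x ∈ ℝ^{d-1} : |A_x| > s}`. -/
def levelSet {n : ℕ} (A : Set (Sp n)) (s : ℝ) : Set (Edim n) :=
  {x | ENNReal.ofReal s < volume (vslice A x)}

/-- For a Borel set `A ⊆ ℝ^d` (`d ≥ 2`) with `|π(A)| < ∞` and `r, t > 0`,
`|{s > 0 : |𝒜(s)| − |𝒜(s+t)| > r}| ≤ t r⁻¹ |π(A)|`. -/
theorem level_set_jump_measure_bound
    (d : ℕ) (hd : 2 ≤ d) (A : Set (Sp (d-1))) (hA : MeasurableSet A)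
    (hπ : volume (Prod.fst '' A) < ⊤) (r t : ℝ) (hr : 0 < r) (ht : 0 < t) :
    volume {s : ℝ | 0 < s ∧
        volume (levelSet A (s + t)) + ENNReal.ofReal r < volume (levelSet A s)}
      ≤ ENNReal.ofReal (t * r⁻¹) * volume (Prod.fst '' A) := by
  set C := volume (Prod.fst '' A) with hC
  set f : ℝ → ℝ≥0∞ := fun s => volume (levelSet A s) with hf
  have hfC : ∀ s, f s ≤ C := by
    intro s
    refine measure_mono fun x hx => ?_
    have hne : (vslice A x).Nonempty := by
      refine nonempty_of_measure_ne_zero (μ := (volume : Measure ℝ)) fun h0 => ?_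
      simp only [levelSet, mem_setOf_eq, h0] at hx
      exact zero_le.not_gt hx
    rcases hne with ⟨y, hy⟩
    exact ⟨(x, y), hy, rfl⟩
  have hf_anti : Antitone f := fun a b hab =>
    measure_mono fun x hx => (ENNReal.ofReal_le_ofReal hab).trans_lt hx
  have hf_meas : Measurable f := hf_anti.measurable
  have hCne : C ≠ ⊤ := hπ.ne
  have hft_meas : Measurable (fun s : ℝ => f (s + t)) :=
    hf_meas.comp (measurable_add_const t)
  set g : ℝ → ℝ≥0∞ := fun s => f s - f (s + t) with hg
  have hg_meas : Measurable g := hf_meas.sub hft_meas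
  -- step 1: per-N bound on the integral of g
  have key : ∀ N : ℝ, ∫⁻ s in Ioc (0:ℝ) N, g s ≤ ENNReal.ofReal t * C := by
    intro N
    set b := ∫⁻ s in Ioc (0:ℝ) N, f (s + t) with hb
    have hshift : b = ∫⁻ s in Ioc t (N + t), f s := by
      have hemb : MeasurableEmbedding (fun s : ℝ => s + t) :=
        (Homeomorph.addRight t).measurableEmbedding
      have hpre : (fun s : ℝ => s + t) ⁻¹' Ioc t (N + t) = Ioc (0:ℝ) N := by
        ext s
        simp only [mem_preimage, mem_Ioc]
        constructor
        · rintro ⟨h1, h2⟩; exact ⟨by linarith, by linarith⟩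
        · rintro ⟨h1, h2⟩; exact ⟨by linarith, by linarith⟩
      have h2 := (measurePreserving_add_right (volume : Measure ℝ) t).setLIntegral_comp_preimage_emb
        hemb f (Ioc t (N + t))
      rw [hpre] at h2
      rw [hb, ← h2]
    have hb_ne : b ≠ ⊤ := by
      have hle : b ≤ C * volume (Ioc (0:ℝ) N) := by
        rw [hb]
        calc ∫⁻ s in Ioc (0:ℝ) N, f (s + t) ≤ ∫⁻ _ in Ioc (0:ℝ) N, C :=
              lintegral_mono fun s => hfC _
          _ = C * volume (Ioc (0:ℝ) N) := by rw [setLIntegral_const]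
      exact (hle.trans_lt (ENNReal.mul_lt_top hπ (by simp [Real.volume_Ioc]))).ne
    have hsum : (∫⁻ s in Ioc (0:ℝ) N, g s) + b = ∫⁻ s in Ioc (0:ℝ) N, f s := by
      rw [hb, ← lintegral_add_right _ hft_meas]
      refine lintegral_congr fun s => ?_
      exact tsub_add_cancel_of_le (hf_anti (by linarith))
    have hsplit : (∫⁻ s in Ioc (0:ℝ) N, f s) ≤ (∫⁻ s in Ioc (0:ℝ) t, f s) + b := by
      rw [hshift]
      calc (∫⁻ s in Ioc (0:ℝ) N, f s) ≤ ∫⁻ s in Ioc (0:ℝ) t ∪ Ioc t (N + t), f s := by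
            refine lintegral_mono_set fun s hs => ?_
            rcases le_or_gt s t with h | h
            · exact Or.inl ⟨hs.1, h⟩
            · exact Or.inr ⟨h, by have := hs.2; linarith⟩
        _ ≤ _ := lintegral_union_le _ _ _
    have hIoct : (∫⁻ s in Ioc (0:ℝ) t, f s) ≤ ENNReal.ofReal t * C := by
      calc (∫⁻ s in Ioc (0:ℝ) t, f s) ≤ ∫⁻ _ in Ioc (0:ℝ) t, C := lintegral_mono fun s => hfC _
        _ = C * volume (Ioc (0:ℝ) t) := by rw [setLIntegral_const]
        _ = ENNReal.ofReal t * C := by rw [Real.volume_Ioc, mul_comm]; norm_num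
    have hfin : (∫⁻ s in Ioc (0:ℝ) N, g s) + b ≤ ENNReal.ofReal t * C + b :=
      hsum.le.trans (hsplit.trans (add_le_add_left hIoct b))
    exact (ENNReal.add_le_add_iff_right hb_ne).mp hfin
  -- step 2: integral over Ioi 0
  have hint : (∫⁻ s in Ioi (0:ℝ), g s) ≤ ENNReal.ofReal t * C := by
    set gn : ℕ → ℝ → ℝ≥0∞ := fun n => (Ioc (0:ℝ) n).indicator g with hgn
    have hgn_meas : ∀ n, Measurable (gn n) := fun n => hg_meas.indicator measurableSet_Ioc
    have hgn_mono : Monotone gn := fun n m hnm =>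
      indicator_le_indicator_of_subset
        (Ioc_subset_Ioc_right (by exact_mod_cast hnm)) (fun _ => zero_le)
    have hsup : (fun s => ⨆ n, gn n s) = (Ioi (0:ℝ)).indicator g := by
      funext s
      rcases le_or_gt s 0 with h | h
      · simp [hgn, indicator_apply, mem_Ioc, mem_Ioi, h.not_gt]
      · rw [indicator_of_mem (mem_Ioi.mpr h)]
        obtain ⟨n, hn⟩ := exists_nat_ge s
        refine le_antisymm (iSup_le fun m => (indicator_le_self _ _) s) ?_
        exact le_iSup_of_le n (le_of_eq (indicator_of_mem (show s ∈ Ioc (0:ℝ) n from ⟨h, hn⟩) g).symm)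
    calc (∫⁻ s in Ioi (0:ℝ), g s)
        = ∫⁻ s, (Ioi (0:ℝ)).indicator g s := (lintegral_indicator measurableSet_Ioi g).symm
      _ = ∫⁻ s, ⨆ n, gn n s := by rw [← hsup]
      _ = ⨆ n, ∫⁻ s, gn n s := lintegral_iSup hgn_meas hgn_mono
      _ = ⨆ n : ℕ, ∫⁻ s in Ioc (0:ℝ) (n:ℝ), g s :=
          iSup_congr fun n => lintegral_indicator measurableSet_Ioc g
      _ ≤ ENNReal.ofReal t * C := iSup_le fun n => key (n : ℝ)
  -- step 3: Markov inequality
  have hsubset : {s : ℝ | 0 < s ∧ f (s + t) + ENNReal.ofReal r < f s}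
      ⊆ {s : ℝ | ENNReal.ofReal r ≤ g s} ∩ Ioi 0 := by
    rintro s ⟨hs, hlt⟩
    exact ⟨ENNReal.le_sub_of_add_le_left ((hfC _).trans_lt hπ).ne hlt.le, hs⟩
  have hr0 : ENNReal.ofReal r ≠ 0 := by simp [hr, hr.le]
  have hmarkov := meas_ge_le_lintegral_div (μ := (volume : Measure ℝ).restrict (Ioi 0))
    hg_meas.aemeasurable hr0 ENNReal.ofReal_ne_top
  calc volume {s : ℝ | 0 < s ∧ f (s + t) + ENNReal.ofReal r < f s}
      ≤ volume ({s : ℝ | ENNReal.ofReal r ≤ g s} ∩ Ioi 0) := measure_mono hsubset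
    _ = ((volume : Measure ℝ).restrict (Ioi 0)) {s : ℝ | ENNReal.ofReal r ≤ g s} := by
        rw [Measure.restrict_apply (measurableSet_le measurable_const hg_meas)]
    _ ≤ (∫⁻ s in Ioi (0:ℝ), g s) / ENNReal.ofReal r := hmarkov
    _ ≤ (ENNReal.ofReal t * C) / ENNReal.ofReal r :=
        ENNReal.div_le_div_right hint _
    _ = ENNReal.ofReal (t * r⁻¹) * C := by
        rw [div_eq_mul_inv, ENNReal.ofReal_mul ht.le, ← ENNReal.ofReal_inv_of_pos hr]
        ring
end
end

section
/- Let d ≥ 2, let 0 < c < C < ∞ and R < ∞, and let ℱ be the collection of all Borel sets A ⊆ B(0,R) ⊂ ℝ^d with c ≤ |A| ≤ C. Then the set of indicator functions {𝟙_{A^♮} : A ∈ ℱ} is a precompact (totally bounded) subset of L²(ℝ^d). -/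
open MeasureTheory Set Pointwise Filter ENNReal

noncomputable section

namespace NatSymmProof

/-- the slice set: a ball whose volume is `a`. -/
def Sl (n : ℕ) (a : ℝ≥0∞) : Set (Edim n) :=
  {x | volume (Metric.ball (0 : Edim n) ‖x‖) < a}

/-- the symmetric decreasing body determined by a profile `g`. -/
def T (n : ℕ) (g : ℝ → ℝ≥0∞) : Set (Sp n) := {p | p.1 ∈ Sl n (g p.2)}

variable {n : ℕ}

lemma nontrivial_Edim (hn : n ≠ 0) : Nontrivial (Edim n) := by
  have : Nonempty (Fin n) := ⟨⟨0, Nat.pos_of_ne_zero hn⟩⟩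
  obtain ⟨i⟩ := this
  refine ⟨EuclideanSpace.single i 1, 0, fun h => ?_⟩
  have := congrArg (· i) h
  simp [EuclideanSpace.single_apply] at this

lemma Sl_eq_ball (hn : n ≠ 0) {a : ℝ≥0∞} (ha : a ≠ ∞) :
    Sl n a = Metric.ball 0
      (((a / volume (Metric.ball (0 : Edim n) 1)).toReal) ^ ((n : ℝ)⁻¹)) := by
  haveI := nontrivial_Edim hn
  set V1 := volume (Metric.ball (0 : Edim n) 1) with hV1
  have hV0 : V1 ≠ 0 := (Metric.measure_ball_pos _ _ one_pos).ne'
  have hVt : V1 ≠ ∞ := measure_ball_lt_top.ne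
  have hdiv : a / V1 ≠ ∞ := (ENNReal.div_lt_top ha hV0).ne
  set s : ℝ := (a / V1).toReal with hs
  have hs0 : 0 ≤ s := ENNReal.toReal_nonneg
  set ρ : ℝ := s ^ ((n : ℝ)⁻¹) with hρ
  have hρ0 : 0 ≤ ρ := Real.rpow_nonneg hs0 _
  have hρn : ρ ^ n = s := by
    rw [hρ, ← Real.rpow_natCast (s ^ ((n:ℝ)⁻¹)) n, ← Real.rpow_mul hs0,
      inv_mul_cancel₀ (by exact_mod_cast hn : (n:ℝ) ≠ 0), Real.rpow_one]
  ext x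
  simp only [Sl, mem_setOf_eq, Metric.mem_ball, dist_zero_right]
  rw [Measure.addHaar_ball _ _ (norm_nonneg x), finrank_euclideanSpace_fin, ← hV1]
  rw [← ENNReal.lt_div_iff_mul_lt (Or.inl hV0) (Or.inl hVt)]
  rw [ENNReal.ofReal_lt_iff_lt_toReal (by positivity) hdiv, ← hs, ← hρn]
  exact pow_lt_pow_iff_left₀ (norm_nonneg x) hρ0 hn

lemma measurableSet_Sl (hn : n ≠ 0) {a : ℝ≥0∞} (ha : a ≠ ∞) : MeasurableSet (Sl n a) := by
  rw [Sl_eq_ball hn ha]; exact measurableSet_ball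

lemma vol_Sl (hn : n ≠ 0) {a : ℝ≥0∞} (ha : a ≠ ∞) : volume (Sl n a) = a := by
  haveI := nontrivial_Edim hn
  set V1 := volume (Metric.ball (0 : Edim n) 1) with hV1
  have hV0 : V1 ≠ 0 := (Metric.measure_ball_pos _ _ one_pos).ne'
  have hVt : V1 ≠ ∞ := measure_ball_lt_top.ne
  have hdiv : a / V1 ≠ ∞ := (ENNReal.div_lt_top ha hV0).ne
  rw [Sl_eq_ball hn ha, Measure.addHaar_ball _ _ (by positivity), finrank_euclideanSpace_fin]
  rw [← Real.rpow_natCast ((a / V1).toReal ^ ((n:ℝ)⁻¹)) n,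
    ← Real.rpow_mul ENNReal.toReal_nonneg, inv_mul_cancel₀ (by exact_mod_cast hn : (n:ℝ) ≠ 0),
    Real.rpow_one, ENNReal.ofReal_toReal hdiv, ← hV1]
  exact ENNReal.div_mul_cancel hV0 hVt

lemma Sl_mono {a b : ℝ≥0∞} (hab : a ≤ b) : Sl n a ⊆ Sl n b :=
  fun _ hx => lt_of_lt_of_le hx hab

lemma measurableSet_T (hn : n ≠ 0) {g : ℝ → ℝ≥0∞} (hg : Measurable g) :
    MeasurableSet (T n g) := by
  haveI := nontrivial_Edim hn
  have hT : T n g = {p : Sp n |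
      ENNReal.ofReal (‖p.1‖ ^ n) * volume (Metric.ball (0 : Edim n) 1) < g p.2} := by
    ext p
    simp only [T, Sl, mem_setOf_eq]
    rw [Measure.addHaar_ball _ _ (norm_nonneg p.1), finrank_euclideanSpace_fin]
  rw [hT]
  exact measurableSet_lt
    (((measurable_fst.norm.pow_const n).ennreal_ofReal).mul_const _)
    (hg.comp measurable_snd)

lemma vol_slices {W : Set (Sp n)} (hW : MeasurableSet W) :
    volume W = ∫⁻ t, volume {x : Edim n | (x, t) ∈ W} := by
  rw [show (volume : Measure (Sp n)) = (volume : Measure (Edim n)).prod volume from rfl]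
  exact Measure.prod_apply_symm hW

lemma vol_T (hn : n ≠ 0) {g : ℝ → ℝ≥0∞} (hg : Measurable g) (hgf : ∀ t, g t ≠ ∞) :
    volume (T n g) = ∫⁻ t, g t := by
  rw [vol_slices (measurableSet_T hn hg)]
  exact lintegral_congr fun t => vol_Sl hn (hgf t)

lemma vol_sdiff (hn : n ≠ 0) {g h : ℝ → ℝ≥0∞} (hg : Measurable g) (hh : Measurable h)
    (hgf : ∀ t, g t ≠ ∞) (hhf : ∀ t, h t ≠ ∞) :
    volume ((T n g \ T n h) ∪ (T n h \ T n g)) = ∫⁻ t, ((g t - h t) + (h t - g t)) := by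
  rw [vol_slices (((measurableSet_T hn hg).diff (measurableSet_T hn hh)).union
    ((measurableSet_T hn hh).diff (measurableSet_T hn hg)))]
  refine lintegral_congr fun t => ?_
  have hsl : {x : Edim n | (x, t) ∈ (T n g \ T n h) ∪ (T n h \ T n g)} =
      (Sl n (g t) \ Sl n (h t)) ∪ (Sl n (h t) \ Sl n (g t)) := rfl
  rw [hsl]
  rcases le_total (g t) (h t) with hle | hle
  · rw [Set.diff_eq_empty.mpr (Sl_mono hle), Set.empty_union,
      measure_diff (Sl_mono hle) (measurableSet_Sl hn (hgf t)).nullMeasurableSet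
        (by rw [vol_Sl hn (hgf t)]; exact hgf t),
      vol_Sl hn (hgf t), vol_Sl hn (hhf t), tsub_eq_zero_of_le hle, zero_add]
  · rw [Set.diff_eq_empty.mpr (Sl_mono hle), Set.union_empty,
      measure_diff (Sl_mono hle) (measurableSet_Sl hn (hhf t)).nullMeasurableSet
        (by rw [vol_Sl hn (hhf t)]; exact hhf t),
      vol_Sl hn (hgf t), vol_Sl hn (hhf t), tsub_eq_zero_of_le hle, add_zero]

lemma floor_grid_bounds {b Br : ℝ} {N : ℕ} (hb : 0 ≤ b) (hBr : 0 < Br) (hN : (0:ℝ) < N) :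
    ((⌊b * N / Br⌋₊ : ℕ) : ℝ) * Br / N ≤ b ∧
      b ≤ ((⌊b * N / Br⌋₊ : ℕ) : ℝ) * Br / N + Br / N := by
  have hfl : ((⌊b * N / Br⌋₊ : ℕ) : ℝ) ≤ b * N / Br := Nat.floor_le (by positivity)
  have hfl2 : b * N / Br < (⌊b * N / Br⌋₊ : ℕ) + 1 := Nat.lt_floor_add_one _
  constructor
  · rw [div_le_iff₀ hN]
    calc ((⌊b * N / Br⌋₊ : ℕ) : ℝ) * Br ≤ (b * N / Br) * Br := by nlinarith
      _ = b * N := by field_simp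
  · rw [← add_div, le_div_iff₀ hN]
    have h3 : b * N < ((⌊b * N / Br⌋₊ : ℕ) + 1) * Br := by
      calc b * N = (b * N / Br) * Br := by field_simp
        _ < ((⌊b * N / Br⌋₊ : ℕ) + 1) * Br := by nlinarith
    nlinarith

lemma floor_grid_lt {b Br : ℝ} {N : ℕ} (hb : 0 ≤ b) (hbBr : b ≤ Br) (hBr : 0 < Br)
    (hN : (0:ℝ) < N) : ⌊b * N / Br⌋₊ < N + 1 := by
  have h2 : b * N / Br ≤ (N : ℝ) := by
    rw [div_le_iff₀ hBr]; nlinarith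
  exact Nat.lt_succ_of_le ((Nat.floor_mono h2).trans_eq (Nat.floor_natCast N))

end NatSymmProof

open NatSymmProof Metric

set_option maxHeartbeats 4000000 in
/-- Let `ℱ` be the family of Borel sets `A ⊆ B(0,R) ⊂ ℝ^d` with `c ≤ |A| ≤ C`. The set of
indicator functions `{𝟙_{A^♮} : A ∈ ℱ}`, viewed in `L²(ℝ^d)`, is totally bounded
(precompact). -/
theorem natSymm_indicators_totallyBounded
    (d : ℕ) (hd : 2 ≤ d) (c C R : ℝ) (hc : 0 < c) (hcC : c < C) :
    TotallyBounded {f : Lp ℝ 2 (volume : Measure (Sp (d-1))) |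
      ∃ A : Set (Sp (d-1)), MeasurableSet A ∧ A ⊆ Metric.closedBall 0 R ∧
        ENNReal.ofReal c ≤ volume A ∧ volume A ≤ ENNReal.ofReal C ∧
        (f : Sp (d-1) → ℝ) =ᵐ[volume] Set.indicator (natSymm A) 1} := by
  have hn : d - 1 ≠ 0 := by omega
  -- basic facts about members of the family
  have hA_mem : ∀ (A : Set (Sp (d-1))), A ⊆ Metric.closedBall 0 R →
      ∀ p ∈ A, ‖p.1‖ ≤ R ∧ |p.2| ≤ R := by
    intro A hAsub p hp
    have h1 := hAsub hp
    rw [Metric.mem_closedBall, Prod.dist_eq] at h1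
    have h2 : dist p.1 (0 : Edim (d-1)) ≤ R := le_trans (le_max_left _ _) h1
    have h3 : dist p.2 (0 : ℝ) ≤ R := le_trans (le_max_right _ _) h1
    rw [dist_zero_right] at h2
    rw [Real.dist_eq, sub_zero] at h3
    exact ⟨h2, h3⟩
  rcases le_or_gt R 0 with hR | hR
  · -- degenerate case : the family is empty
    convert totallyBounded_empty
    rw [Set.eq_empty_iff_forall_notMem]
    rintro f ⟨A, hAm, hAsub, hlow, -, -⟩
    have hA0 : volume A = 0 := by
      have h2 : A ⊆ (Set.univ : Set (Edim (d-1))) ×ˢ Set.Icc (-R) R := by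
        intro p hp
        exact ⟨trivial, Set.mem_Icc.mpr (abs_le.mp (hA_mem A hAsub p hp).2)⟩
      refine le_antisymm ?_ (zero_le)
      calc volume A ≤ volume ((Set.univ : Set (Edim (d-1))) ×ˢ Set.Icc (-R) R) :=
            measure_mono h2
        _ = volume (Set.univ : Set (Edim (d-1))) * volume (Set.Icc (-R) R) := by
            rw [show (volume : Measure (Sp (d-1)))
              = (volume : Measure (Edim (d-1))).prod volume from rfl]
            exact Measure.prod_prod _ _
        _ = 0 := by
            rw [Real.volume_Icc, ENNReal.ofReal_eq_zero.mpr (by linarith), mul_zero]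
    rw [hA0] at hlow
    have := ENNReal.ofReal_pos.mpr hc
    exact absurd (le_antisymm hlow (zero_le)) this.ne'
  -- main case

  set B : ℝ≥0∞ := volume (Metric.closedBall (0 : Edim (d-1)) R) with hBdef
  have hBfin : B ≠ ∞ := measure_closedBall_lt_top.ne
  have hBpos : 0 < B :=
    lt_of_lt_of_le (Metric.measure_ball_pos _ _ hR) (measure_mono Metric.ball_subset_closedBall)
  set Br : ℝ := B.toReal with hBrdef
  have hBrpos : 0 < Br := ENNReal.toReal_pos hBpos.ne' hBfin
  have hBr : B = ENNReal.ofReal Br := (ENNReal.ofReal_toReal hBfin).symm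
  rw [Metric.totallyBounded_iff]
  intro ε hε
  obtain ⟨N, hNgt⟩ := exists_nat_gt (8 * R * Br / ε ^ 2)
  have hNpos : 0 < N := by
    have h0 : (0:ℝ) < 8 * R * Br / ε ^ 2 := by positivity
    exact_mod_cast Nat.cast_pos.mp (h0.trans hNgt)
  have hN0R : (0:ℝ) < N := Nat.cast_pos.mpr hNpos
  set δ : ℝ := R / N with hδdef
  have hδpos : 0 < δ := div_pos hR hN0R
  have hNδ : (N : ℝ) * δ = R := by rw [hδdef]; field_simp
  -- the candidate step profiles
  set gstep : (Fin N → Fin (N+1)) → ℝ → ℝ≥0∞ := fun j t =>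
    if h : ⌊|t| / δ⌋₊ < N then ENNReal.ofReal (((j ⟨⌊|t| / δ⌋₊, h⟩ : ℕ) : ℝ) * Br / N) else 0
    with hgstepdef
  have hgstep_meas : ∀ j, Measurable (gstep j) := by
    intro j
    have : gstep j = (fun k : ℕ => if h : k < N then
        ENNReal.ofReal (((j ⟨k, h⟩ : ℕ) : ℝ) * Br / N) else 0) ∘ (fun t : ℝ => ⌊|t| / δ⌋₊) := rfl
    rw [this]
    exact (measurable_from_nat).comp (Nat.measurable_floor.comp (measurable_abs.div_const δ))
  have hgstep_fin : ∀ j t, gstep j t ≠ ∞ := by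
    intro j t
    rw [hgstepdef]; dsimp only
    split
    · exact ENNReal.ofReal_ne_top
    · exact ENNReal.zero_ne_top
  have hgstep_le : ∀ j t, gstep j t ≤ B := by
    intro j t
    rw [hgstepdef]; dsimp only
    split
    next h =>
      rw [hBr]
      apply ENNReal.ofReal_le_ofReal
      have hj : (((j ⟨⌊|t| / δ⌋₊, h⟩ : Fin (N+1)) : ℕ) : ℝ) ≤ N := by
        exact_mod_cast Nat.le_of_lt_succ (Fin.is_lt _)
      rw [div_le_iff₀ hN0R]
      nlinarith
    next => exact zero_le
  have hgstep_zero : ∀ j t, R ≤ |t| → gstep j t = 0 := by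
    intro j t ht
    rw [hgstepdef]; dsimp only
    rw [dif_neg]
    rw [not_lt]
    apply Nat.le_floor
    rw [le_div_iff₀ hδpos]
    rw [hNδ]
    exact ht

  -- the finite net
  have hTmeas : ∀ j, MeasurableSet (T (d-1) (gstep j)) :=
    fun j => measurableSet_T hn (hgstep_meas j)
  have hTfin : ∀ j, volume (T (d-1) (gstep j)) ≠ ∞ := by
    intro j
    rw [vol_T hn (hgstep_meas j) (hgstep_fin j)]
    have hle : ∫⁻ t, gstep j t ≤ ∫⁻ t, (Set.Ioo (-R) R).indicator (fun _ => B) t := by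
      apply lintegral_mono
      intro t
      by_cases ht : t ∈ Set.Ioo (-R) R
      · rw [Set.indicator_of_mem ht]; exact hgstep_le j t
      · rw [Set.indicator_of_notMem ht, hgstep_zero j t ?_]
        rcases not_and_or.mp (Set.mem_Ioo.not.mp ht) with h | h
        · exact le_abs.mpr (Or.inr (by push_neg at h; linarith))
        · exact le_abs.mpr (Or.inl (by push_neg at h; linarith))
    refine (lt_of_le_of_lt hle ?_).ne
    rw [lintegral_indicator_const measurableSet_Ioo]
    exact ENNReal.mul_lt_top hBfin.lt_top (by rw [Real.volume_Ioo]; exact ENNReal.ofReal_lt_top)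
  set netf : (Fin N → Fin (N+1)) → Lp ℝ 2 (volume : Measure (Sp (d-1))) := fun j =>
    (memLp_indicator_const 2 (hTmeas j) (1:ℝ) (Or.inr (hTfin j))).toLp _ with hnetf
  refine ⟨Set.range netf, Set.finite_range netf, ?_⟩
  rintro f ⟨A, hAm, hAsub, hclow, -, hfae⟩
  -- properties of the profile of natSymm A
  have hmA : Measurable fun x : Edim (d-1) => volume (vslice A x) :=
    measurable_measure_prodMk_left hAm
  have hSt : MeasurableSet (steiner A) :=
    measurableSet_lt ((measurable_snd.abs.const_mul 2).ennreal_ofReal) (hmA.comp measurable_fst)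
  set gA : ℝ → ℝ≥0∞ := fun t => volume (hslice (steiner A) t) with hgAdef
  have hgA_meas : Measurable gA := measurable_measure_prodMk_right hSt
  have hnatT : natSymm A = T (d-1) gA := rfl
  have hgA_le : ∀ t, gA t ≤ B := by
    intro t
    refine measure_mono fun x hx => ?_
    have hpos : (0:ℝ≥0∞) < volume (vslice A x) := lt_of_le_of_lt (zero_le) hx
    obtain ⟨y, hy⟩ := nonempty_of_measure_ne_zero hpos.ne'
    have h2 := (hA_mem A hAsub (x, y) hy).1
    exact Metric.mem_closedBall.mpr (by rwa [dist_zero_right])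
  have hgA_fin : ∀ t, gA t ≠ ∞ := fun t => ((hgA_le t).trans_lt hBfin.lt_top).ne
  have hgA_anti : ∀ s t : ℝ, |s| ≤ |t| → gA t ≤ gA s := by
    intro s t hst
    refine measure_mono fun x hx => ?_
    exact lt_of_le_of_lt (ENNReal.ofReal_le_ofReal (by linarith)) hx
  have hgA_zero : ∀ t, R ≤ |t| → gA t = 0 := by
    intro t ht
    rw [hgAdef]; dsimp only
    rw [show hslice (steiner A) t = (∅ : Set (Edim (d-1))) from ?_, measure_empty]
    rw [Set.eq_empty_iff_forall_notMem]
    intro x hx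
    have hle : volume (vslice A x) ≤ ENNReal.ofReal (2 * |t|) := by
      calc volume (vslice A x) ≤ volume (Set.Icc (-R) R) := measure_mono fun y hy =>
            Set.mem_Icc.mpr (abs_le.mp (hA_mem A hAsub (x, y) hy).2)
        _ = ENNReal.ofReal (2 * R) := by rw [Real.volume_Icc]; norm_num [two_mul]
        _ ≤ _ := ENNReal.ofReal_le_ofReal (by linarith)
    exact absurd hx (not_lt.mpr hle)

  -- discretized values
  set a : ℕ → ℝ≥0∞ := fun k => gA (k * δ) with hadef
  have ha_anti : ∀ {k l : ℕ}, k ≤ l → a l ≤ a k := by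
    intro k l hkl
    apply hgA_anti
    rw [abs_of_nonneg (by positivity), abs_of_nonneg (by positivity)]
    exact mul_le_mul_of_nonneg_right (Nat.cast_le.mpr hkl) hδpos.le
  have ha_le : ∀ k, a k ≤ B := fun k => hgA_le _
  have ha_fin : ∀ k, a k ≠ ∞ := fun k => hgA_fin _
  have haN : a N = 0 := by
    apply hgA_zero
    rw [abs_of_nonneg (by positivity), hNδ]
  set jA : Fin N → Fin (N+1) := fun k => ⟨⌊(a k).toReal * N / Br⌋₊,
    floor_grid_lt ENNReal.toReal_nonneg (ENNReal.toReal_mono hBfin (ha_le k)) hBrpos hN0R⟩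
    with hjAdef
  have hjval : ∀ k : Fin N, ((jA k : ℕ) : ℝ) = ((⌊(a (k : ℕ)).toReal * N / Br⌋₊ : ℕ) : ℝ) :=
    fun k => rfl
  have hv_le : ∀ k : Fin N, ENNReal.ofReal (((jA k : ℕ) : ℝ) * Br / N) ≤ a (k : ℕ) := by
    intro k
    conv_rhs => rw [← ENNReal.ofReal_toReal (ha_fin k)]
    apply ENNReal.ofReal_le_ofReal
    rw [hjval k]
    exact (floor_grid_bounds ENNReal.toReal_nonneg hBrpos hN0R).1
  have hv_ge : ∀ k : Fin N, a (k : ℕ) ≤ ENNReal.ofReal (((jA k : ℕ) : ℝ) * Br / N)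
      + B / (N : ℝ≥0∞) := by
    intro k
    have hBN : B / (N : ℝ≥0∞) = ENNReal.ofReal (Br / N) := by
      rw [ENNReal.ofReal_div_of_pos hN0R, ENNReal.ofReal_natCast, ← hBr]
    rw [hBN, ← ENNReal.ofReal_add (by positivity) (by positivity)]
    conv_lhs => rw [← ENNReal.ofReal_toReal (ha_fin k)]
    apply ENNReal.ofReal_le_ofReal
    rw [hjval k]
    exact (floor_grid_bounds ENNReal.toReal_nonneg hBrpos hN0R).2

  -- key pointwise estimate
  have key : ∀ k : ℕ, k < N → ∀ t : ℝ, (k : ℝ) * δ ≤ |t| → |t| ≤ ((k : ℝ) + 1) * δ →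
      (gA t - gstep jA t) + (gstep jA t - gA t)
        ≤ 2 * (a k - a (k+1)) + 2 * (B / (N : ℝ≥0∞)) := by
    intro k hk t ht1 ht2
    have hx1 : gA t ≤ a k := hgA_anti _ _ (by rw [abs_of_nonneg (by positivity)]; exact ht1)
    have hx2 : a (k+1) ≤ gA t := by
      apply hgA_anti
      have habs : |((k+1 : ℕ) : ℝ) * δ| = ((k : ℝ) + 1) * δ := by
        rw [abs_of_nonneg (by positivity)]; push_cast; ring
      rw [habs]
      exact ht2
    have hm1 : k ≤ ⌊|t| / δ⌋₊ := Nat.le_floor (by rw [le_div_iff₀ hδpos]; exact ht1)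
    have hm2 : ⌊|t| / δ⌋₊ ≤ k + 1 := by
      have h2 : |t| / δ ≤ ((k+1 : ℕ) : ℝ) := by
        rw [div_le_iff₀ hδpos]; push_cast; linarith
      exact (Nat.floor_mono h2).trans_eq (Nat.floor_natCast _)
    have hgs : gstep jA t = if h : ⌊|t| / δ⌋₊ < N then
        ENNReal.ofReal (((jA ⟨⌊|t| / δ⌋₊, h⟩ : ℕ) : ℝ) * Br / N) else 0 := rfl
    have hy1 : gstep jA t ≤ a k := by
      rw [hgs]
      split
      next h =>
        exact le_trans (hv_le ⟨⌊|t| / δ⌋₊, h⟩) (ha_anti hm1)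
      next => exact zero_le
    have hy2 : a (k+1) ≤ gstep jA t + B / (N : ℝ≥0∞) := by
      rw [hgs]
      split
      next h =>
        exact le_trans (ha_anti hm2) (hv_ge ⟨⌊|t| / δ⌋₊, h⟩)
      next h =>
        have hkN : k + 1 = N := le_antisymm hk (le_trans (not_lt.mp h) hm2)
        rw [hkN, haN]
        exact zero_le
    have hstep : a (k+1) ≤ a k := ha_anti (Nat.le_succ k)
    have hd1 : gA t - gstep jA t ≤ (a k - a (k+1)) + B / (N : ℝ≥0∞) := by
      rw [tsub_le_iff_right]
      calc gA t ≤ a k := hx1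
        _ = (a k - a (k+1)) + a (k+1) := (tsub_add_cancel_of_le hstep).symm
        _ ≤ (a k - a (k+1)) + (gstep jA t + B / (N : ℝ≥0∞)) := add_le_add_right hy2 _
        _ = (a k - a (k+1)) + B / (N : ℝ≥0∞) + gstep jA t := by ring
    have hd2 : gstep jA t - gA t ≤ (a k - a (k+1)) + B / (N : ℝ≥0∞) := by
      rw [tsub_le_iff_right]
      calc gstep jA t ≤ a k := hy1
        _ = (a k - a (k+1)) + a (k+1) := (tsub_add_cancel_of_le hstep).symm
        _ ≤ (a k - a (k+1)) + gA t := add_le_add_right hx2 _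
        _ ≤ (a k - a (k+1)) + B / (N : ℝ≥0∞) + gA t := by
            rw [add_right_comm]
            exact le_add_right le_rfl
    calc (gA t - gstep jA t) + (gstep jA t - gA t)
        ≤ ((a k - a (k+1)) + B / (N : ℝ≥0∞)) + ((a k - a (k+1)) + B / (N : ℝ≥0∞)) :=
          add_le_add hd1 hd2
      _ = 2 * (a k - a (k+1)) + 2 * (B / (N : ℝ≥0∞)) := by ring
  -- telescoping
  have tele : ∑ k ∈ Finset.range N, (a k - a (k+1)) ≤ B := by
    have htel : ∀ M : ℕ, ∑ k ∈ Finset.range M, (a k - a (k+1)) = a 0 - a M := by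
      intro M
      induction M with
      | zero => simp
      | succ M ih =>
        rw [Finset.sum_range_succ, ih,
          tsub_add_tsub_cancel (ha_anti (Nat.zero_le M)) (ha_anti (Nat.le_succ M))]
    rw [htel]
    exact le_trans tsub_le_self (ha_le 0)

  -- forget the definitions, keep only the established facts
  clear_value a jA gA gstep
  -- integral estimate
  set D : ℝ → ℝ≥0∞ := fun t => (gA t - gstep jA t) + (gstep jA t - gA t) with hDdef
  have hDzero : ∀ t, t ∉ Set.Ioo (-R) R → D t = 0 := by
    intro t ht
    have hRt : R ≤ |t| := by
      rcases not_and_or.mp (Set.mem_Ioo.not.mp ht) with h | h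
      · exact le_abs.mpr (Or.inr (by push_neg at h; linarith))
      · exact le_abs.mpr (Or.inl (by push_neg at h; linarith))
    rw [hDdef]; dsimp only
    rw [hgA_zero t hRt, hgstep_zero jA t hRt]
    simp
  set U : ℕ → Set ℝ := fun k =>
    Set.Icc ((k : ℝ) * δ) (((k : ℝ) + 1) * δ) ∪
      Set.Icc (-(((k : ℝ) + 1) * δ)) (-((k : ℝ) * δ)) with hUdef
  have hUabs : ∀ k : ℕ, ∀ t ∈ U k, (k : ℝ) * δ ≤ |t| ∧ |t| ≤ ((k : ℝ) + 1) * δ := by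
    intro k t ht
    rcases ht with h | h
    · have h0 : (0:ℝ) ≤ t := le_trans (by positivity) h.1
      rw [abs_of_nonneg h0]
      exact ⟨h.1, h.2⟩
    · have h0 : t ≤ 0 := le_trans h.2 (by simp; positivity)
      rw [abs_of_nonpos h0]
      constructor <;> linarith [h.1, h.2]
  have hUsub : Set.Ioo (-R) R ⊆ ⋃ i : Fin N, U i := by
    intro t ht
    have habs : |t| < R := abs_lt.mpr ⟨ht.1, ht.2⟩
    obtain ⟨m, hm⟩ : ∃ m : ℕ, m = ⌊|t| / δ⌋₊ := ⟨_, rfl⟩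
    have hkN : m < N := by
      rw [hm, Nat.floor_lt (by positivity), div_lt_iff₀ hδpos]
      calc |t| < R := habs
        _ = N * δ := hNδ.symm
    refine Set.mem_iUnion.mpr ⟨⟨m, hkN⟩, ?_⟩
    have h1 : (m : ℝ) * δ ≤ |t| := by
      rw [← le_div_iff₀ hδpos, hm]
      exact Nat.floor_le (by positivity)
    have h2 : |t| ≤ ((m : ℝ) + 1) * δ := by
      rw [← div_le_iff₀ hδpos, hm]
      exact (Nat.lt_floor_add_one _).le
    show t ∈ U m
    rcases le_total 0 t with h0 | h0
    · rw [abs_of_nonneg h0] at h1 h2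
      exact Or.inl ⟨h1, h2⟩
    · rw [abs_of_nonpos h0] at h1 h2
      exact Or.inr ⟨by linarith, by linarith⟩
  have hUvol : ∀ k : ℕ, volume (U k) ≤ 2 * ENNReal.ofReal δ := by
    intro k
    refine le_trans (measure_union_le _ _) ?_
    rw [Real.volume_Icc, Real.volume_Icc]
    have e1 : ((k : ℝ) + 1) * δ - (k : ℝ) * δ = δ := by ring
    have e2 : -((k : ℝ) * δ) - -(((k : ℝ) + 1) * δ) = δ := by ring
    rw [e1, e2, two_mul]
  have hInt : ∫⁻ t, D t < ENNReal.ofReal (ε ^ 2) := by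
    have h1 : ∫⁻ t, D t = ∫⁻ t in Set.Ioo (-R) R, D t := by
      rw [← lintegral_indicator measurableSet_Ioo]
      refine lintegral_congr fun t => ?_
      by_cases ht : t ∈ Set.Ioo (-R) R
      · rw [Set.indicator_of_mem ht]
      · rw [Set.indicator_of_notMem ht, hDzero t ht]
    have h2 : ∫⁻ t in Set.Ioo (-R) R, D t ≤ ∑ k ∈ Finset.range N,
        ((2 * (a k - a (k+1)) + 2 * (B / (N : ℝ≥0∞))) * (2 * ENNReal.ofReal δ)) := by
      calc ∫⁻ t in Set.Ioo (-R) R, D t ≤ ∫⁻ t in ⋃ i : Fin N, U i, D t :=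
            lintegral_mono_set hUsub
        _ ≤ ∑' i : Fin N, ∫⁻ t in U i, D t := lintegral_iUnion_le _ _
        _ = ∑ i : Fin N, ∫⁻ t in U i, D t := tsum_fintype _
        _ = ∑ k ∈ Finset.range N, ∫⁻ t in U k, D t :=
            Fin.sum_univ_eq_sum_range (fun k => ∫⁻ t in U k, D t) N
        _ ≤ ∑ k ∈ Finset.range N,
            ((2 * (a k - a (k+1)) + 2 * (B / (N : ℝ≥0∞))) * (2 * ENNReal.ofReal δ)) := by
            apply Finset.sum_le_sum
            intro k hk
            have hkN := Finset.mem_range.mp hk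
            calc ∫⁻ t in U k, D t
                ≤ ∫⁻ _ in U k, (2 * (a k - a (k+1)) + 2 * (B / (N : ℝ≥0∞))) := by
                  refine setLIntegral_mono' ?_ ?_
                  · exact (measurableSet_Icc).union measurableSet_Icc
                  · intro t ht
                    obtain ⟨hta, htb⟩ := hUabs k t ht
                    exact key k hkN t hta htb
              _ = (2 * (a k - a (k+1)) + 2 * (B / (N : ℝ≥0∞))) * volume (U k) :=
                  setLIntegral_const _ _
              _ ≤ _ := mul_le_mul_right (hUvol k) _
    have h3 : ∑ k ∈ Finset.range N,
        ((2 * (a k - a (k+1)) + 2 * (B / (N : ℝ≥0∞))) * (2 * ENNReal.ofReal δ))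
        ≤ 8 * B * ENNReal.ofReal δ := by
      rw [← Finset.sum_mul]
      have h4 : ∑ k ∈ Finset.range N, (2 * (a k - a (k+1)) + 2 * (B / (N : ℝ≥0∞)))
          ≤ 2 * B + 2 * B := by
        rw [Finset.sum_add_distrib, Finset.sum_const, Finset.card_range, ← Finset.mul_sum]
        apply add_le_add
        · exact mul_le_mul_right tele _
        · rw [nsmul_eq_mul, ← mul_assoc, mul_comm (N : ℝ≥0∞) 2, mul_assoc]
          apply mul_le_mul_right
          rw [ENNReal.mul_div_cancel' (fun h => absurd h (by exact_mod_cast hNpos.ne')) (fun h => absurd h (ENNReal.natCast_ne_top N))]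
      calc (∑ k ∈ Finset.range N, (2 * (a k - a (k+1)) + 2 * (B / (N : ℝ≥0∞))))
            * (2 * ENNReal.ofReal δ)
          ≤ (2 * B + 2 * B) * (2 * ENNReal.ofReal δ) := mul_le_mul_left h4 _
        _ = 8 * B * ENNReal.ofReal δ := by ring
    have h5 : 8 * B * ENNReal.ofReal δ < ENNReal.ofReal (ε ^ 2) := by
      have hof : (8 : ℝ≥0∞) * B * ENNReal.ofReal δ = ENNReal.ofReal (8 * Br * δ) := by
        rw [hBr, ENNReal.ofReal_mul (by positivity : (0:ℝ) ≤ 8 * Br),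
          ENNReal.ofReal_mul (by norm_num : (0:ℝ) ≤ 8), ENNReal.ofReal_ofNat]
      rw [hof, ENNReal.ofReal_lt_ofReal_iff (by positivity)]
      rw [hδdef]
      rw [div_lt_iff₀ (by positivity : (0:ℝ) < ε ^ 2)] at hNgt
      calc 8 * Br * (R / N) = (8 * R * Br) / N := by ring
        _ < ε ^ 2 := by rw [div_lt_iff₀ hN0R]; linarith
    calc ∫⁻ t, D t = ∫⁻ t in Set.Ioo (-R) R, D t := h1
      _ ≤ _ := h2
      _ ≤ 8 * B * ENNReal.ofReal δ := h3
      _ < _ := h5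

  -- conclusion : distance estimate
  have hΔmeas : MeasurableSet ((T (d-1) gA \ T (d-1) (gstep jA)) ∪
      (T (d-1) (gstep jA) \ T (d-1) gA)) :=
    ((measurableSet_T hn hgA_meas).diff (hTmeas jA)).union
      ((hTmeas jA).diff (measurableSet_T hn hgA_meas))
  have hΔvol : volume ((T (d-1) gA \ T (d-1) (gstep jA)) ∪
      (T (d-1) (gstep jA) \ T (d-1) gA)) < ENNReal.ofReal (ε ^ 2) := by
    rw [vol_sdiff hn hgA_meas (hgstep_meas jA) hgA_fin (hgstep_fin jA)]
    simpa only [hDdef] using hInt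
  refine Set.mem_biUnion (Set.mem_range_self jA) ?_
  rw [Metric.mem_ball, Lp.dist_def]
  have hcoe : (⇑f - ⇑(netf jA)) =ᵐ[volume] fun p =>
      (natSymm A).indicator 1 p - (T (d-1) (gstep jA)).indicator (fun _ => (1:ℝ)) p := by
    have hco : ⇑(netf jA) =ᵐ[volume] (T (d-1) (gstep jA)).indicator (fun _ => (1:ℝ)) := by
      rw [hnetf]
      exact MemLp.coeFn_toLp _
    filter_upwards [hfae, hco] with p hp1 hp2
    simp only [Pi.sub_apply, hp1, hp2]
  rw [eLpNorm_congr_ae hcoe]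
  have hmono : eLpNorm (fun p => (natSymm A).indicator 1 p
        - (T (d-1) (gstep jA)).indicator (fun _ => (1:ℝ)) p) 2 volume
      ≤ eLpNorm (((T (d-1) gA \ T (d-1) (gstep jA)) ∪
          (T (d-1) (gstep jA) \ T (d-1) gA)).indicator fun _ => (1:ℝ)) 2 volume := by
    apply eLpNorm_mono
    intro p
    rw [hnatT]
    by_cases hS : p ∈ T (d-1) gA <;> by_cases hT : p ∈ T (d-1) (gstep jA) <;>
      simp [Set.indicator_apply, hS, hT]
  have heq : eLpNorm (((T (d-1) gA \ T (d-1) (gstep jA)) ∪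
        (T (d-1) (gstep jA) \ T (d-1) gA)).indicator fun _ => (1:ℝ)) 2 volume
      = volume ((T (d-1) gA \ T (d-1) (gstep jA)) ∪
        (T (d-1) (gstep jA) \ T (d-1) gA)) ^ (1/2 : ℝ) := by
    rw [eLpNorm_indicator_const hΔmeas (by norm_num) (by norm_num)]
    norm_num
  have hlt : volume ((T (d-1) gA \ T (d-1) (gstep jA)) ∪
      (T (d-1) (gstep jA) \ T (d-1) gA)) ^ (1/2 : ℝ) < ENNReal.ofReal ε := by
    have h6 : ENNReal.ofReal (ε ^ 2) = (ENNReal.ofReal ε) ^ (2:ℕ) := ENNReal.ofReal_pow hε.le 2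
    have h7 := h6 ▸ hΔvol
    calc volume ((T (d-1) gA \ T (d-1) (gstep jA)) ∪
          (T (d-1) (gstep jA) \ T (d-1) gA)) ^ (1/2:ℝ)
        < ((ENNReal.ofReal ε) ^ (2:ℕ)) ^ (1/2:ℝ) := ENNReal.rpow_lt_rpow h7 (by norm_num)
      _ = ENNReal.ofReal ε := by
          rw [← ENNReal.rpow_natCast, ← ENNReal.rpow_mul]
          norm_num
  have hfin2 : eLpNorm (fun p => (natSymm A).indicator 1 p
        - (T (d-1) (gstep jA)).indicator (fun _ => (1:ℝ)) p) 2 volume < ENNReal.ofReal ε :=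
    lt_of_le_of_lt (hmono.trans_eq heq) hlt
  have hfin3 := (ENNReal.toReal_lt_toReal (ne_top_of_lt hfin2) ENNReal.ofReal_ne_top).mpr hfin2
  rwa [ENNReal.toReal_ofReal hε.le] at hfin3
end
end

section
/- Let d ≥ 2 and C₀ < ∞. There exists C < ∞, depending only on d and C₀, with the following property. Let 𝒞 ⊆ ℝ^d be a convex set with |𝒞| = 1, |𝒞 △ 𝒞^♮| = 0, and |π(𝒞)| ≤ C₀. For λ > 0 let 𝒞(λ) = {x ∈ ℝ^{d−1} : |𝒞_x| > λ}. Then for every ε > 0, |𝒞 ∖ π^{−1}(𝒞(ε))| ≤ Cε². -/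
open MeasureTheory Set Pointwise Filter ENNReal

noncomputable section

instance instHaarSp (n : ℕ) : (volume : Measure (Sp n)).IsAddHaarMeasure :=
  Measure.prod.instIsAddHaarMeasure _ _

lemma fub {n : ℕ} {S : Set (Sp n)} (hS : MeasurableSet S) :
    volume S = ∫⁻ x, volume (Prod.mk x ⁻¹' S) := by
  rw [Measure.volume_eq_prod, Measure.prod_apply hS]

lemma slice_lower {n : ℕ} {A : Set (Sp n)} (hA : Convex ℝ A) (x₀ x : Edim n)
    (hx : (vslice A x).Nonempty) {θ : ℝ} (h0 : 0 ≤ θ) (h1 : θ ≤ 1) :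
    ENNReal.ofReal θ * volume (vslice A x₀) ≤ volume (vslice A (θ • x₀ + (1 - θ) • x)) := by
  obtain ⟨y, hy⟩ := hx
  have hsub : (fun t => (1 - θ) * y + θ * t) '' (vslice A x₀) ⊆
      vslice A (θ • x₀ + (1 - θ) • x) := by
    rintro _ ⟨t, ht, rfl⟩
    have hmem : θ • ((x₀, t) : Sp n) + (1 - θ) • ((x, y) : Sp n) ∈ A :=
      hA ht hy h0 (by linarith) (by ring)
    have heq : θ • ((x₀, t) : Sp n) + (1 - θ) • ((x, y) : Sp n)
        = (θ • x₀ + (1 - θ) • x, (1 - θ) * y + θ * t) := by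
      simp [Prod.ext_iff, smul_eq_mul]; ring
    rw [heq] at hmem
    exact hmem
  calc ENNReal.ofReal θ * volume (vslice A x₀)
      = volume ((fun t => (1 - θ) * y + θ * t) '' vslice A x₀) := by
        rw [show (fun t => (1 - θ) * y + θ * t) '' vslice A x₀
            = ((1 - θ) * y) +ᵥ (θ • vslice A x₀) by
          rw [← Set.image_smul, ← Set.image_vadd, Set.image_image]
          simp [smul_eq_mul, vadd_eq_add]]
        rw [measure_vadd, Measure.addHaar_smul, Module.finrank_self, pow_one, abs_of_nonneg h0]
    _ ≤ _ := measure_mono hsub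

set_option maxHeartbeats 1600000 in
/-- There is `C < ∞`, depending only on `d, C₀`, such that for every convex `𝒞 ⊆ ℝ^d` with
`|𝒞| = 1`, `|𝒞 ∆ 𝒞^♮| = 0`, and `|π(𝒞)| ≤ C₀`, one has
`|𝒞 \ π⁻¹(𝒞(ε))| ≤ C ε²` for every `ε > 0`. -/
theorem convex_quadratic_tail
    (d : ℕ) (hd : 2 ≤ d) (C₀ : ℝ) :
    ∃ C : ℝ, 0 < C ∧
      ∀ 𝒞 : Set (Sp (d-1)), Convex ℝ 𝒞 → volume 𝒞 = 1 →
        volume (symmDiff 𝒞 (natSymm 𝒞)) = 0 →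
        volume (Prod.fst '' 𝒞) ≤ ENNReal.ofReal C₀ →
        ∀ ε : ℝ, 0 < ε →
          volume (𝒞 \ Prod.fst ⁻¹' (levelSet 𝒞 ε)) ≤ ENNReal.ofReal (C * ε^2) := by
  set n := d - 1 with hn
  set B : ℝ := max C₀ 1 with hBdef
  have hB1 : (1:ℝ) ≤ B := le_max_right _ _
  have hB0 : (0:ℝ) < B := lt_of_lt_of_le one_pos hB1
  set c : ℝ := 1 / (2 * B) with hcdef
  have hc0 : 0 < c := by positivity
  have hcB : c * B = 1/2 := by rw [hcdef]; field_simp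
  refine ⟨4 * d * B ^ 2, by positivity, ?_⟩
  intro 𝒞 hconv hvol _hsymm hproj ε hε
  set f : Edim n → ℝ≥0∞ := fun x => volume (vslice 𝒞 x) with hf
  have hKsub : {x | 0 < f x} ⊆ Prod.fst '' 𝒞 := by
    intro x hx
    obtain ⟨y, hy⟩ := nonempty_of_measure_ne_zero (ne_of_gt hx)
    exact ⟨(x, y), hy, rfl⟩
  have hKB : volume {x | 0 < f x} ≤ ENNReal.ofReal B :=
    le_trans (le_trans (measure_mono hKsub) hproj) (ofReal_le_ofReal (le_max_left _ _))
  have hnm : NullMeasurableSet 𝒞 volume := hconv.nullMeasurableSet _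
  obtain ⟨D, hD𝒞, hDmeas, hDae⟩ := hnm.exists_measurable_subset_ae_eq
  have hnull : volume (𝒞 \ D) = 0 := (ae_eq_set.mp hDae).2
  have hvolD : volume D = 1 := by rw [measure_congr hDae, hvol]
  set f' : Edim n → ℝ≥0∞ := fun x => volume (Prod.mk x ⁻¹' D) with hf'
  have hf'meas : Measurable f' := measurable_measure_prodMk_left hDmeas
  have hf'le : ∀ x, f' x ≤ f x := fun x => measure_mono (preimage_mono hD𝒞)
  have hae : ∀ᵐ x, f x ≤ f' x := by
    set N := toMeasurable volume (𝒞 \ D) with hNdef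
    have hNmeas : MeasurableSet N := measurableSet_toMeasurable volume (𝒞 \ D)
    have hNvol : volume N = 0 := by rw [hNdef, measure_toMeasurable, hnull]
    have h0 : ∫⁻ x, volume (Prod.mk x ⁻¹' N) = 0 := by rw [← fub hNmeas, hNvol]
    have h1 := (lintegral_eq_zero_iff (measurable_measure_prodMk_left hNmeas)).mp h0
    filter_upwards [h1] with x hx
    have hsub : vslice 𝒞 x ⊆ (Prod.mk x ⁻¹' D) ∪ (Prod.mk x ⁻¹' N) := by
      intro y hy
      by_cases h : (x, y) ∈ D
      · exact Or.inl h
      · exact Or.inr (subset_toMeasurable _ _ ⟨hy, h⟩)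
    calc f x ≤ volume ((Prod.mk x ⁻¹' D) ∪ (Prod.mk x ⁻¹' N)) := measure_mono hsub
      _ ≤ f' x + volume (Prod.mk x ⁻¹' N) := measure_union_le _ _
      _ = f' x := by rw [show volume (Prod.mk x ⁻¹' N) = 0 from hx, add_zero]
  set L := levelSet 𝒞 ε with hL
  set L'' := {x | ENNReal.ofReal ε < f' x} with hL''
  have hL''meas : MeasurableSet L'' := hf'meas measurableSet_Ioi
  have hL''L : L'' ⊆ L := fun x hx => lt_of_lt_of_le hx (hf'le x)
  set K := {x | 0 < f x} with hK
  set K' := {x | 0 < f' x} with hK'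
  have hK'meas : MeasurableSet K' := hf'meas measurableSet_Ioi
  have step1 : volume (𝒞 \ Prod.fst ⁻¹' L) ≤ volume (D \ Prod.fst ⁻¹' L'') := by
    have hsub : 𝒞 \ Prod.fst ⁻¹' L ⊆ (D \ Prod.fst ⁻¹' L'') ∪ (𝒞 \ D) := by
      rintro ⟨x, y⟩ ⟨hmem, hnot⟩
      by_cases h : (x, y) ∈ D
      · exact Or.inl ⟨h, fun hx => hnot (hL''L hx)⟩
      · exact Or.inr ⟨hmem, h⟩
    calc volume (𝒞 \ Prod.fst ⁻¹' L)
        ≤ volume (D \ Prod.fst ⁻¹' L'') + volume (𝒞 \ D) :=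
          le_trans (measure_mono hsub) (measure_union_le _ _)
      _ = volume (D \ Prod.fst ⁻¹' L'') := by rw [hnull, add_zero]
  have step2 : volume (D \ Prod.fst ⁻¹' L'') ≤ ENNReal.ofReal ε * volume (K' \ L'') := by
    rw [fub (hDmeas.diff (hL''meas.preimage measurable_fst))]
    have hpt : ∀ x, volume (Prod.mk x ⁻¹' (D \ Prod.fst ⁻¹' L''))
        ≤ (K' \ L'').indicator (fun _ => ENNReal.ofReal ε) x := by
      intro x
      by_cases hx : x ∈ L''
      · have he : Prod.mk x ⁻¹' (D \ Prod.fst ⁻¹' L'') = ∅ := by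
          ext y; simp [hx]
        simp [he]
      · have hsub2 : Prod.mk x ⁻¹' (D \ Prod.fst ⁻¹' L'') ⊆ Prod.mk x ⁻¹' D :=
          fun y hy => hy.1
        by_cases hx0 : f' x = 0
        · calc volume (Prod.mk x ⁻¹' (D \ Prod.fst ⁻¹' L'')) ≤ f' x := measure_mono hsub2
            _ = 0 := hx0
            _ ≤ _ := zero_le
        · have hxm : x ∈ K' \ L'' := ⟨pos_iff_ne_zero.mpr hx0, hx⟩
          calc volume (Prod.mk x ⁻¹' (D \ Prod.fst ⁻¹' L'')) ≤ f' x := measure_mono hsub2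
            _ ≤ ENNReal.ofReal ε := not_lt.mp hx
            _ = (K' \ L'').indicator (fun _ => ENNReal.ofReal ε) x :=
                (Set.indicator_of_mem hxm (fun _ => ENNReal.ofReal ε)).symm
    calc ∫⁻ x, volume (Prod.mk x ⁻¹' (D \ Prod.fst ⁻¹' L''))
        ≤ ∫⁻ x, (K' \ L'').indicator (fun _ => ENNReal.ofReal ε) x := lintegral_mono hpt
      _ = ENNReal.ofReal ε * volume (K' \ L'') := by
          rw [lintegral_indicator (hK'meas.diff hL''meas), setLIntegral_const]
  have step3 : volume (K' \ L'') ≤ volume (K \ L) := by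
    have hsub : K' \ L'' ⊆ (K \ L) ∪ {x | ¬ f x ≤ f' x} := by
      rintro x ⟨hx1, hx2⟩
      by_cases h : x ∈ L
      · right
        intro hle
        exact absurd (lt_of_lt_of_le h (le_trans hle (not_lt.mp hx2))) (lt_irrefl _)
      · left; exact ⟨lt_of_lt_of_le hx1 (hf'le x), h⟩
    have hzero : volume {x | ¬ f x ≤ f' x} = 0 := hae
    calc volume (K' \ L'') ≤ volume (K \ L) + volume {x | ¬ f x ≤ f' x} :=
          le_trans (measure_mono hsub) (measure_union_le _ _)
      _ = volume (K \ L) := by rw [hzero, add_zero]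
  by_cases hεc : ε < c
  · -- main case
    have hex : ∃ x₀, ENNReal.ofReal c < f x₀ := by
      by_contra hcon
      push_neg at hcon
      have hb : ∀ x, f' x ≤ K'.indicator (fun _ => ENNReal.ofReal c) x := by
        intro x
        by_cases h : f' x = 0
        · simp [h]
        · have hxm : x ∈ K' := pos_iff_ne_zero.mpr h
          calc f' x ≤ ENNReal.ofReal c := le_trans (hf'le x) (hcon x)
            _ = K'.indicator (fun _ => ENNReal.ofReal c) x :=
                (Set.indicator_of_mem hxm (fun _ => ENNReal.ofReal c)).symm
      have hK'K : K' ⊆ K := fun x hx => lt_of_lt_of_le hx (hf'le x)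
      have h1 : (1:ℝ≥0∞) ≤ ENNReal.ofReal c * ENNReal.ofReal B := by
        calc (1:ℝ≥0∞) = volume D := hvolD.symm
          _ = ∫⁻ x, f' x := fub hDmeas
          _ ≤ ∫⁻ x, K'.indicator (fun _ => ENNReal.ofReal c) x := lintegral_mono hb
          _ = ENNReal.ofReal c * volume K' := by
              rw [lintegral_indicator hK'meas, setLIntegral_const]
          _ ≤ ENNReal.ofReal c * ENNReal.ofReal B :=
              mul_le_mul_right (le_trans (measure_mono hK'K) hKB) _
      rw [← ENNReal.ofReal_mul hc0.le, hcB] at h1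
      have := (ENNReal.one_le_ofReal).mp h1
      linarith
    obtain ⟨x₀, hx₀⟩ := hex
    set θ : ℝ := ε / c with hθdef
    have hθ0 : 0 < θ := div_pos hε hc0
    have hθ1 : θ < 1 := (div_lt_one hc0).mpr hεc
    have hθc : θ * c = ε := div_mul_cancel₀ _ (ne_of_gt hc0)
    have hx₀K : x₀ ∈ K := lt_trans (ofReal_pos.mpr hc0) hx₀
    have hKconv : Convex ℝ K := by
      intro u hu v hv a b ha hb hab
      rcases eq_or_lt_of_le ha with h0 | hpos
      · have hb1 : b = 1 := by linarith
        have : a • u + b • v = v := by rw [← h0, hb1]; simp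
        rw [this]; exact hv
      · have hvne : (vslice 𝒞 v).Nonempty := nonempty_of_measure_ne_zero (ne_of_gt hv)
        have hcomb := slice_lower hconv u v hvne hpos.le (by linarith)
        have hb' : b = 1 - a := by linarith
        show 0 < f (a • u + b • v)
        rw [hb']
        exact lt_of_lt_of_le
          (ENNReal.mul_pos (ofReal_pos.mpr hpos).ne' (ne_of_gt hu)) hcomb
    set g : Edim n → Edim n := fun x => θ • x₀ + (1 - θ) • x with hgdef
    have hgK : g '' K ⊆ K := by
      rintro _ ⟨x, hx, rfl⟩
      exact hKconv hx₀K hx hθ0.le (by linarith) (by ring)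
    have hgL : g '' K ⊆ L := by
      rintro _ ⟨x, hx, rfl⟩
      have hne : (vslice 𝒞 x).Nonempty := nonempty_of_measure_ne_zero (ne_of_gt hx)
      have h1 := slice_lower hconv x₀ x hne hθ0.le hθ1.le
      show ENNReal.ofReal ε < volume (vslice 𝒞 (g x))
      calc ENNReal.ofReal ε = ENNReal.ofReal θ * ENNReal.ofReal c := by
            rw [← ENNReal.ofReal_mul hθ0.le, hθc]
        _ < ENNReal.ofReal θ * f x₀ :=
            (ENNReal.mul_lt_mul_iff_right (ofReal_pos.mpr hθ0).ne' ofReal_ne_top).mpr hx₀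
        _ ≤ volume (vslice 𝒞 (g x)) := h1
    have himg : g '' K = (θ • x₀) +ᵥ ((1 - θ) • K) := by
      rw [← Set.image_smul, ← Set.image_vadd, Set.image_image]
      rfl
    have hgvol : volume (g '' K) = ENNReal.ofReal ((1 - θ)^n) * volume K := by
      rw [himg, measure_vadd, Measure.addHaar_smul, finrank_euclideanSpace_fin,
        abs_of_nonneg (pow_nonneg (by linarith) n)]
    have hKfin : volume K ≠ ∞ := (lt_of_le_of_lt hKB ofReal_lt_top).ne
    have hgnm : NullMeasurableSet (g '' K) volume := by
      rw [himg]
      exact (((hKconv.smul _)).vadd _).nullMeasurableSet _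
    have hdiff : volume (K \ g '' K) = volume K - volume (g '' K) :=
      measure_diff hgK hgnm (by rw [hgvol]; exact ENNReal.mul_ne_top ofReal_ne_top hKfin)
    have hber : 1 - (n:ℝ) * θ ≤ (1 - θ)^n := by
      have h := one_add_mul_le_pow (by linarith : (-2:ℝ) ≤ -θ) n
      have he : (1:ℝ) + -θ = 1 - θ := by ring
      rw [he] at h
      linarith
    have hKL : volume (K \ L) ≤ ENNReal.ofReal ((n:ℝ) * θ * B) := by
      calc volume (K \ L) ≤ volume (K \ g '' K) :=
            measure_mono (diff_subset_diff_right hgL)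
        _ = volume K - ENNReal.ofReal ((1 - θ)^n) * volume K := by rw [hdiff, hgvol]
        _ = (1 - ENNReal.ofReal ((1 - θ)^n)) * volume K := by
            rw [ENNReal.sub_mul (fun _ _ => hKfin), one_mul]
        _ ≤ ENNReal.ofReal ((n:ℝ) * θ) * ENNReal.ofReal B := by
            refine mul_le_mul' ?_ hKB
            rw [← ENNReal.ofReal_one, ← ENNReal.ofReal_sub _ (pow_nonneg (by linarith) n)]
            exact ofReal_le_ofReal (by linarith)
        _ = ENNReal.ofReal ((n:ℝ) * θ * B) := by
            rw [← ENNReal.ofReal_mul (by positivity)]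
    have hθval : θ = 2 * B * ε := by
      rw [hθdef, hcdef]
      field_simp
    have hnd : (n:ℝ) ≤ d := by exact_mod_cast Nat.sub_le d 1
    calc volume (𝒞 \ Prod.fst ⁻¹' L)
        ≤ ENNReal.ofReal ε * volume (K' \ L'') := step1.trans step2
      _ ≤ ENNReal.ofReal ε * ENNReal.ofReal ((n:ℝ) * θ * B) :=
          mul_le_mul_right (step3.trans hKL) _
      _ = ENNReal.ofReal (ε * ((n:ℝ) * θ * B)) := (ENNReal.ofReal_mul hε.le).symm
      _ ≤ ENNReal.ofReal (4 * d * B^2 * ε^2) := by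
          apply ofReal_le_ofReal
          rw [hθval]
          have hkey : (0:ℝ) ≤ (4*(d:ℝ) - 2*(n:ℝ)) * (B^2 * ε^2) :=
            mul_nonneg (by linarith) (mul_nonneg (sq_nonneg B) (sq_nonneg ε))
          nlinarith [hkey]
  · -- easy case ε ≥ c
    have hεc' : c ≤ ε := not_lt.mp hεc
    have h1 : volume (𝒞 \ Prod.fst ⁻¹' L) ≤ 1 :=
      le_trans (measure_mono diff_subset) hvol.le
    refine h1.trans ?_
    rw [show (1:ℝ≥0∞) = ENNReal.ofReal 1 from ofReal_one.symm]
    apply ofReal_le_ofReal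
    have hd2 : (2:ℝ) ≤ d := by exact_mod_cast hd
    have hceq : 4 * (d:ℝ) * B^2 * c^2 = d := by
      rw [hcdef]; field_simp; ring
    have hc2 : c^2 ≤ ε^2 := pow_le_pow_left₀ hc0.le hεc' 2
    have h4 : (0:ℝ) ≤ 4*(d:ℝ)*B^2 := by positivity
    have hmul : 4*(d:ℝ)*B^2*c^2 ≤ 4*(d:ℝ)*B^2*ε^2 := mul_le_mul_of_nonneg_left hc2 h4
    linarith
end
end
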